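/- arXiv:math/0304346 — 9 statements merged into one kernel-verified Lean document; each statement's English description precedes it below -/
import Mathlib

section
/- Let ℓ be a line in Euclidean 3-space, p ∈ ℓ a point, v a unit vector, k ∈ (0,1), and t₁, t₂, t₃ nonzero real numbers. For i = 1,2,3 let Sᵢ be the sphere with centre cᵢ = p + tᵢ • v and radius rᵢ = k·|tᵢ| (so the three spheres are inscribed in the cone with apex p, axis direction v and half-angle arcsin k). Then there are infinitely many lines through p that are tangent to all three spheres; in particular the set of lines that meet ℓ and are tangent to S₁, S₂ and S₃ is infinite. -/
noncomputable section

/-- Euclidean 3-space. -/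
abbrev E3 : Type := EuclideanSpace ℝ (Fin 3)

/-- A line in `ℝ³`: a 1-dimensional affine subspace. -/
def IsLine (L : AffineSubspace ℝ E3) : Prop := Module.finrank ℝ L.direction = 1

/-- A plane in `ℝ³`: a 2-dimensional affine subspace. -/
def IsPlane (P : AffineSubspace ℝ E3) : Prop := Module.finrank ℝ P.direction = 2

/-- A line is tangent to the sphere with centre `c` and radius `r` if the distance
from `c` to the line equals `r`. -/
def Tangent (c : E3) (r : ℝ) (L : AffineSubspace ℝ E3) : Prop :=
  Metric.infDist c (L : Set E3) = r

/-- A line `L` meets a line `ℓ` if they have a common point. -/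
def Meets (L ℓ : AffineSubspace ℝ E3) : Prop :=
  ((L : Set E3) ∩ (ℓ : Set E3)).Nonempty

/-
The lines through the apex `p` at angle `arcsin k` to the axis `v` sweep out the cone, and each
of them is at distance `k |t|` from `p + t • v`: for the unit direction `w` the foot of the
perpendicular is `p + t ⟪v, w⟫ • w`. Completing `v` to an orthonormal basis `v, e₁, e₂`, the
directions `√(1 - k²) • v + k • (cos θ • e₁ + sin θ • e₂)`, `θ ∈ [0, π]`, span pairwise distinct
lines, since their common component `√(1 - k²) ≠ 0` along `v` rules out proportionality. All of
these lines meet `ℓ` at `p`.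
-/

section

open RealInnerProductSpace

variable {V : Type*} [NormedAddCommGroup V] [InnerProductSpace ℝ V]

theorem infDist_eq_dist_of_mem_of_vsub_mem_orthogonal {s : AffineSubspace ℝ V}
    [s.direction.HasOrthogonalProjection] {x q : V} (hq : q ∈ s)
    (hxq : x -ᵥ q ∈ s.directionᗮ) : Metric.infDist x s = dist x q := by
  have : Nonempty s := ⟨⟨q, hq⟩⟩
  rw [← EuclideanGeometry.dist_orthogonalProjection_eq_infDist,
    EuclideanGeometry.coe_orthogonalProjection_eq_iff_mem.2 ⟨hq, hxq⟩]

theorem infDist_add_smul_mk'_span_singleton {p v w : V} (hv : ‖v‖ = 1) (hw : ‖w‖ = 1)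
    {k : ℝ} (hk : 0 ≤ k) (hvw : ⟪v, w⟫ ^ 2 = 1 - k ^ 2) (t : ℝ) :
    Metric.infDist (p + t • v) (AffineSubspace.mk' p (ℝ ∙ w)) = k * |t| := by
  have : (AffineSubspace.mk' p (ℝ ∙ w)).direction.HasOrthogonalProjection := by
    rw [AffineSubspace.direction_mk']; infer_instance
  have hfoot : p + (t * ⟪v, w⟫) • w ∈ AffineSubspace.mk' p (ℝ ∙ w) := by
    rw [AffineSubspace.mem_mk', vsub_eq_sub, add_sub_cancel_left]
    exact Submodule.smul_mem _ _ (Submodule.mem_span_singleton_self w)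
  have hperp : (p + t • v) -ᵥ (p + (t * ⟪v, w⟫) • w) ∈ (AffineSubspace.mk' p (ℝ ∙ w)).directionᗮ := by
    rw [AffineSubspace.direction_mk', vsub_eq_sub, add_sub_add_left_eq_sub,
      Submodule.mem_orthogonal_singleton_iff_inner_right, inner_sub_right, real_inner_smul_right,
      real_inner_smul_right, real_inner_self_eq_norm_sq, hw, real_inner_comm]
    ring
  have hsq : ‖t • v - (t * ⟪v, w⟫) • w‖ ^ 2 = (k * |t|) ^ 2 := by
    rw [norm_sub_sq_real, norm_smul, norm_smul, real_inner_smul_left, real_inner_smul_right, hv, hw]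
    simp only [Real.norm_eq_abs, mul_pow, sq_abs]
    linear_combination (-t ^ 2) * hvw
  rw [infDist_eq_dist_of_mem_of_vsub_mem_orthogonal hfoot hperp, dist_eq_norm,
    add_sub_add_left_eq_sub, ← sq_eq_sq₀ (norm_nonneg _) (by positivity), hsq]

theorem eq_of_mk'_span_singleton_eq {p v w₁ w₂ : V}
    (h : AffineSubspace.mk' p (ℝ ∙ w₁) = AffineSubspace.mk' p (ℝ ∙ w₂))
    (hinner : ⟪v, w₁⟫ = ⟪v, w₂⟫) (hne : ⟪v, w₁⟫ ≠ 0) : w₁ = w₂ := by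
  have hspan : (ℝ ∙ w₁) = (ℝ ∙ w₂) := by
    simpa only [AffineSubspace.direction_mk'] using congrArg AffineSubspace.direction h
  obtain ⟨c, rfl⟩ : ∃ c : ℝ, c • w₁ = w₂ :=
    Submodule.mem_span_singleton.1 (hspan ▸ Submodule.mem_span_singleton_self w₂)
  rw [real_inner_smul_right] at hinner
  rw [(mul_eq_right₀ hne).1 hinner.symm, one_smul]

theorem exists_orthonormalBasis_apply_zero_eq [FiniteDimensional ℝ V] {n : ℕ}
    (hn : Module.finrank ℝ V = n + 1) {v : V} (hv : ‖v‖ = 1) :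
    ∃ b : OrthonormalBasis (Fin (n + 1)) ℝ V, b 0 = v := by
  obtain ⟨b, hb⟩ := Orthonormal.exists_orthonormalBasis_extension_of_card_eq (ι := Fin (n + 1))
    (by simpa using hn) (v := fun _ ↦ v) (s := {0}) (orthonormal_subsingleton_iff.2 fun _ ↦ hv)
  exact ⟨b, hb 0 rfl⟩

theorem setOf_lines_tangent_along_cone_infinite {e : Fin 3 → V} (he : Orthonormal ℝ e) (p : V)
    {k : ℝ} (hk : k ∈ Set.Ioo (0 : ℝ) 1) :
    {L : AffineSubspace ℝ V | Module.finrank ℝ L.direction = 1 ∧ p ∈ L ∧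
      ∀ t : ℝ, Metric.infDist (p + t • e 0) L = k * |t|}.Infinite := by
  obtain ⟨hk0, hk1⟩ := hk
  set a := √(1 - k ^ 2)
  have ha : a ^ 2 = 1 - k ^ 2 := Real.sq_sqrt (by nlinarith)
  have ha0 : a ≠ 0 := (Real.sqrt_pos.2 (by nlinarith)).ne'
  set w : ℝ → V := fun θ ↦ ∑ i, ![a, k * Real.cos θ, k * Real.sin θ] i • e i
  have hw_inner (θ : ℝ) (i : Fin 3) : ⟪e i, w θ⟫ = ![a, k * Real.cos θ, k * Real.sin θ] i :=
    he.inner_right_fintype _ i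
  have hw_norm (θ : ℝ) : ‖w θ‖ = 1 := by
    have h : ‖w θ‖ ^ 2 = ∑ i, ![a, k * Real.cos θ, k * Real.sin θ] i ^ 2 := by
      rw [← real_inner_self_eq_norm_sq, he.inner_sum]
      simp only [conj_trivial, sq]
    rw [← pow_eq_one_iff_of_nonneg (norm_nonneg _) two_ne_zero, h]
    simp only [Fin.sum_univ_three, Matrix.cons_val]
    linear_combination ha + k ^ 2 * Real.sin_sq_add_cos_sq θ
  refine Set.infinite_of_injOn_mapsTo (f := fun θ ↦ AffineSubspace.mk' p (ℝ ∙ w θ))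
    (s := Set.Icc 0 Real.pi) ?_ ?_ (Set.Icc_infinite Real.pi_pos)
  · intro θ₁ hθ₁ θ₂ hθ₂ h
    have hw := eq_of_mk'_span_singleton_eq (v := e 0) h (by simp [hw_inner]) (by simpa [hw_inner])
    have hcos := congrArg (⟪e 1, ·⟫) hw
    simp only [hw_inner] at hcos
    exact Real.injOn_cos hθ₁ hθ₂ (mul_left_cancel₀ hk0.ne' (by simpa using hcos))
  · intro θ _
    refine ⟨?_, AffineSubspace.self_mem_mk' _ _, ?_⟩
    · rw [AffineSubspace.direction_mk']
      exact finrank_span_singleton (norm_ne_zero_iff.1 (by simp [hw_norm]))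
    · exact infDist_add_smul_mk'_span_singleton (he.1 0) (hw_norm θ) hk0.le (by simpa [hw_inner])

end

theorem spheres_inscribed_in_cone_general
    (ℓ : AffineSubspace ℝ E3) (p : E3) (hpℓ : p ∈ ℓ)
    (v : E3) (hv : ‖v‖ = 1) (k : ℝ) (hk : k ∈ Set.Ioo (0:ℝ) 1)
    (t₁ t₂ t₃ : ℝ) :
    {L : AffineSubspace ℝ E3 | IsLine L ∧ p ∈ L ∧
        Tangent (p + t₁ • v) (k * |t₁|) L ∧ Tangent (p + t₂ • v) (k * |t₂|) L ∧
        Tangent (p + t₃ • v) (k * |t₃|) L}.Infinite ∧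
    {L : AffineSubspace ℝ E3 | IsLine L ∧ Meets L ℓ ∧
        Tangent (p + t₁ • v) (k * |t₁|) L ∧ Tangent (p + t₂ • v) (k * |t₂|) L ∧
        Tangent (p + t₃ • v) (k * |t₃|) L}.Infinite := by
  obtain ⟨b, rfl⟩ := exists_orthonormalBasis_apply_zero_eq (n := 2) finrank_euclideanSpace_fin hv
  have hcone := setOf_lines_tangent_along_cone_infinite b.orthonormal p hk
  refine ⟨hcone.mono ?_, hcone.mono ?_⟩
  · rintro L ⟨hL, hpL, htangent⟩
    exact ⟨hL, hpL, htangent t₁, htangent t₂, htangent t₃⟩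
  · rintro L ⟨hL, hpL, htangent⟩
    exact ⟨hL, ⟨p, hpL, hpℓ⟩, htangent t₁, htangent t₂, htangent t₃⟩

/-- Three spheres inscribed in a cone whose apex `p` lies on the line `ℓ`: there are
infinitely many lines through `p` tangent to all three spheres, and in particular the
set of lines meeting `ℓ` and tangent to the three spheres is infinite. -/
theorem spheres_inscribed_in_cone
    (ℓ : AffineSubspace ℝ E3) (hℓ : IsLine ℓ) (p : E3) (hpℓ : p ∈ ℓ)
    (v : E3) (hv : ‖v‖ = 1) (k : ℝ) (hk : k ∈ Set.Ioo (0:ℝ) 1)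
    (t₁ t₂ t₃ : ℝ) (ht₁ : t₁ ≠ 0) (ht₂ : t₂ ≠ 0) (ht₃ : t₃ ≠ 0) :
    {L : AffineSubspace ℝ E3 | IsLine L ∧ p ∈ L ∧
        Tangent (p + t₁ • v) (k * |t₁|) L ∧ Tangent (p + t₂ • v) (k * |t₂|) L ∧
        Tangent (p + t₃ • v) (k * |t₃|) L}.Infinite ∧
    {L : AffineSubspace ℝ E3 | IsLine L ∧ Meets L ℓ ∧
        Tangent (p + t₁ • v) (k * |t₁|) L ∧ Tangent (p + t₂ • v) (k * |t₂|) L ∧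
        Tangent (p + t₃ • v) (k * |t₃|) L}.Infinite :=
  spheres_inscribed_in_cone_general ℓ p hpℓ v hv k hk t₁ t₂ t₃
end
end

section
/- Let Π be a plane in Euclidean 3-space, ℓ a line with ℓ ⊆ Π, o ∈ Π a point and ρ > 0, and let S₁, S₂, S₃ be spheres with radii r₁, r₂, r₃ > 0 such that the circle Π ∩ S(o,ρ) is contained in Sᵢ for i = 1,2,3 (the spheres meet in a common circle lying in the plane Π containing ℓ). Then the set of lines that meet ℓ and are tangent to all three spheres is infinite; indeed every line contained in Π that is tangent to the circle Π ∩ S(o,ρ) (i.e. lies in Π at distance ρ from o) and is not parallel to ℓ is such a line. -/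
/-!
A sphere through the circle `P ∩ S(o, ρ)` has its centre `c` on the axis of the circle: `c` and `o`
are both equidistant from any two antipodal points of the circle, so `c -ᵥ o ⟂ P`. By Pythagoras,
`dist c x ^ 2 = dist c o ^ 2 + dist o x ^ 2` for every `x ∈ P` and `r ^ 2 = dist c o ^ 2 + ρ ^ 2`,
so every line of `P` at distance `ρ` from `o` is at distance `r` from `c`. A line of `P` not
parallel to `ℓ` meets `ℓ`. Finally, with `u` a unit vector along `ℓ` and `v ⟂ u` in `P`, the
tangent lines at the points `o + ρ (cos θ u + sin θ v)`, `|θ| < π / 2`, are pairwise distinct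
and none of them is parallel to `ℓ`.
-/

noncomputable section

open Metric Set Module
open scoped RealInnerProductSpace

theorem Metric.infDist_eq_sqrt_of_forall_dist_sq_eq {α : Type*} [MetricSpace α] [ProperSpace α]
    {s : Set α} (hs : IsClosed s) (hne : s.Nonempty) {x y : α} {a : ℝ}
    (h : ∀ z ∈ s, dist x z ^ 2 = a + dist y z ^ 2) : infDist x s = √(a + infDist y s ^ 2) := by
  obtain ⟨z, hz, hyz⟩ := hs.exists_infDist_eq_dist hne y
  obtain ⟨z', hz', hxz'⟩ := hs.exists_infDist_eq_dist hne x
  have hle : infDist x s ^ 2 ≤ a + infDist y s ^ 2 := by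
    rw [hyz, ← h z hz]
    exact pow_le_pow_left₀ infDist_nonneg (infDist_le_dist_of_mem hz) 2
  have hge : a + infDist y s ^ 2 ≤ infDist x s ^ 2 := by
    rw [hxz', h z' hz']
    gcongr
    exacts [infDist_nonneg, infDist_le_dist_of_mem hz']
  rw [← le_antisymm hle hge, Real.sqrt_sq infDist_nonneg]

section NormedSpace

variable {E : Type*} [NormedAddCommGroup E] [NormedSpace ℝ E]

theorem exists_pos_smul_norm_eq {y : E} (hy : y ≠ 0) {ρ : ℝ} (hρ : 0 < ρ) :
    ∃ t : ℝ, 0 < t ∧ ‖t • y‖ = ρ :=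
  ⟨ρ / ‖y‖, by positivity, by
    rw [norm_smul, Real.norm_of_nonneg (by positivity)]
    field_simp [norm_ne_zero_iff.mpr hy]⟩

theorem Submodule.exists_mem_norm_eq_one {K : Submodule ℝ E} (hK : K ≠ ⊥) : ∃ u ∈ K, ‖u‖ = 1 :=
  let ⟨y, hy, hy0⟩ := exists_mem_ne_zero_of_ne_bot hK
  ⟨‖y‖⁻¹ • y, K.smul_mem _ hy, norm_smul_inv_norm hy0⟩

end NormedSpace

section Lines

variable {k W Q : Type*} [Field k] [AddCommGroup W] [Module k W] [AddTorsor W Q]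

theorem Submodule.sup_eq_of_finrank_eq_one {A B C : Submodule k W} (hA : finrank k A = 1)
    (hB : finrank k B = 1) (hC : finrank k C = 2) (hAC : A ≤ C) (hBC : B ≤ C) (hAB : A ≠ B) :
    A ⊔ B = C := by
  have : FiniteDimensional k C := .of_finrank_pos (by omega)
  have : FiniteDimensional k A := Submodule.finiteDimensional_of_le hAC
  have : FiniteDimensional k ↥(A ⊔ B) := Submodule.finiteDimensional_of_le (sup_le hAC hBC)
  have hlt : A < A ⊔ B := lt_of_le_of_ne le_sup_left fun h =>
    hAB (Submodule.eq_of_le_of_finrank_le (h ▸ le_sup_right) (by rw [hA, hB])).symm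
  have := Submodule.finrank_lt_finrank_of_lt hlt
  exact Submodule.eq_of_le_of_finrank_le (sup_le hAC hBC) (by omega)

namespace AffineSubspace

theorem nonempty_of_finrank_direction_ne_zero {L : AffineSubspace k Q}
    (hL : finrank k L.direction ≠ 0) : (L : Set Q).Nonempty := by
  rw [nonempty_iff_ne_bot]
  rintro rfl
  exact hL (by rw [direction_bot, finrank_bot])

theorem inter_nonempty_of_direction_sup_eq {L M P : AffineSubspace k Q} (hLP : L ≤ P)
    (hMP : M ≤ P) (hL : (L : Set Q).Nonempty) (hM : (M : Set Q).Nonempty)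
    (hd : L.direction ⊔ M.direction = P.direction) : ((L : Set Q) ∩ M).Nonempty := by
  by_contra hLM
  have hlt := sup_direction_lt_of_nonempty_of_inter_empty hL hM (not_nonempty_iff_eq_empty.mp hLM)
  exact (hlt.trans_le (direction_le (sup_le hLP hMP))).ne hd

theorem inter_nonempty_of_finrank_direction_eq_one {L M P : AffineSubspace k Q} (hLP : L ≤ P)
    (hMP : M ≤ P) (hL : finrank k L.direction = 1) (hM : finrank k M.direction = 1)
    (hP : finrank k P.direction = 2) (hLM : L.direction ≠ M.direction) :
    ((L : Set Q) ∩ M).Nonempty :=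
  inter_nonempty_of_direction_sup_eq hLP hMP
    (nonempty_of_finrank_direction_ne_zero (ne_of_eq_of_ne hL one_ne_zero))
    (nonempty_of_finrank_direction_ne_zero (ne_of_eq_of_ne hM one_ne_zero))
    (Submodule.sup_eq_of_finrank_eq_one hL hM hP (direction_le hLP) (direction_le hMP) hLM)

end AffineSubspace

end Lines

variable {V Pt : Type*} [NormedAddCommGroup V] [InnerProductSpace ℝ V] [MetricSpace Pt]
  [NormedAddTorsor V Pt]

theorem inner_smul_add_smul_of_orthonormal {u v : V} (hu : ‖u‖ = 1) (hv : ‖v‖ = 1)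
    (huv : ⟪u, v⟫ = 0) (a b c d : ℝ) : ⟪a • u + b • v, c • u + d • v⟫ = a * c + b * d := by
  simp only [inner_add_left, inner_add_right, real_inner_smul_left, real_inner_smul_right,
    real_inner_self_eq_norm_sq, hu, hv, huv, real_inner_comm u v]
  ring

theorem EuclideanGeometry.dist_sq_eq_dist_sq_add_dist_sq_of_inner_eq_zero {a b c : Pt}
    (h : ⟪a -ᵥ b, c -ᵥ b⟫ = 0) : dist a c ^ 2 = dist a b ^ 2 + dist b c ^ 2 := by
  have := (dist_sq_eq_dist_sq_add_dist_sq_iff_angle_eq_pi_div_two a b c).mpr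
    ((InnerProductGeometry.inner_eq_zero_iff_angle_eq_pi_div_two _ _).mp h)
  rw [dist_comm b c]
  linear_combination this

open EuclideanGeometry

namespace AffineSubspace

section Circle

variable {P : AffineSubspace ℝ Pt} {o c : Pt} {ρ r : ℝ}

theorem vadd_mem_inter_sphere (hoP : o ∈ P) {y : V} (hy : y ∈ P.direction) :
    y +ᵥ o ∈ (P : Set Pt) ∩ sphere o ‖y‖ :=
  ⟨vadd_mem_of_mem_direction hy hoP, by simp [Metric.mem_sphere, dist_eq_norm_vsub V]⟩

theorem inner_vsub_eq_zero_of_inter_sphere_subset_sphere (hoP : o ∈ P) (hρ : 0 < ρ)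
    (h : (P : Set Pt) ∩ sphere o ρ ⊆ sphere c r) {y : V} (hy : y ∈ P.direction) :
    ⟪c -ᵥ o, y⟫ = 0 := by
  rcases eq_or_ne y 0 with rfl | hy0
  · exact inner_zero_right _
  obtain ⟨t, ht, hty⟩ := exists_pos_smul_norm_eq hy0 hρ
  have hp₁ := vadd_mem_inter_sphere hoP (P.direction.neg_mem (P.direction.smul_mem t hy))
  have hp₂ := vadd_mem_inter_sphere hoP (P.direction.smul_mem t hy)
  rw [norm_neg, hty] at hp₁
  rw [hty] at hp₂
  have hkite := inner_vsub_vsub_of_dist_eq_of_dist_eq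
    ((Metric.mem_sphere.mp hp₁.2).trans (Metric.mem_sphere.mp hp₂.2).symm)
    ((Metric.mem_sphere.mp (h hp₁)).trans (Metric.mem_sphere.mp (h hp₂)).symm)
  rw [vadd_vsub_vadd_cancel_right, sub_neg_eq_add, ← two_smul ℝ, smul_smul,
    inner_smul_right] at hkite
  exact (mul_eq_zero.mp hkite).resolve_left (by positivity)

theorem eq_sqrt_of_inter_sphere_subset_sphere (hoP : o ∈ P) (hρ : 0 < ρ) (hP : P.direction ≠ ⊥)
    (h : (P : Set Pt) ∩ sphere o ρ ⊆ sphere c r) : r = √(dist c o ^ 2 + ρ ^ 2) := by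
  obtain ⟨y, hy, hy0⟩ := Submodule.exists_mem_ne_zero_of_ne_bot hP
  obtain ⟨t, -, hty⟩ := exists_pos_smul_norm_eq hy0 hρ
  have hp := vadd_mem_inter_sphere hoP (P.direction.smul_mem t hy)
  rw [hty] at hp
  have hperp : ⟪c -ᵥ o, (t • y +ᵥ o) -ᵥ o⟫ = 0 := by
    rw [vadd_vsub]
    exact inner_vsub_eq_zero_of_inter_sphere_subset_sphere hoP hρ h (P.direction.smul_mem t hy)
  rw [← Metric.mem_sphere.mp (h hp), dist_comm, ← Metric.mem_sphere'.mp hp.2,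
    ← dist_sq_eq_dist_sq_add_dist_sq_of_inner_eq_zero hperp, Real.sqrt_sq dist_nonneg]

theorem infDist_eq_of_inter_sphere_subset_sphere [ProperSpace Pt] (hoP : o ∈ P) (hρ : 0 < ρ)
    (hP : P.direction ≠ ⊥) (h : (P : Set Pt) ∩ sphere o ρ ⊆ sphere c r) {s : Set Pt}
    (hs : IsClosed s) (hne : s.Nonempty) (hsP : s ⊆ P) (hso : infDist o s = ρ) :
    infDist c s = r := by
  rw [eq_sqrt_of_inter_sphere_subset_sphere hoP hρ hP h, ← hso]
  refine infDist_eq_sqrt_of_forall_dist_sq_eq hs hne fun z hz => ?_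
  exact dist_sq_eq_dist_sq_add_dist_sq_of_inner_eq_zero
    (inner_vsub_eq_zero_of_inter_sphere_subset_sphere hoP hρ h (vsub_mem_direction (hsP hz) hoP))

end Circle

section Perpendicular

variable {D : Submodule ℝ V} {o p q : Pt}

theorem dist_sq_eq_of_mem_mk' (hD : ∀ x ∈ D, ⟪o -ᵥ p, x⟫ = 0) (hq : q ∈ mk' p D) :
    dist o q ^ 2 = dist o p ^ 2 + dist p q ^ 2 :=
  dist_sq_eq_dist_sq_add_dist_sq_of_inner_eq_zero (hD _ (mem_mk'.mp hq))

theorem infDist_mk' (hD : ∀ x ∈ D, ⟪o -ᵥ p, x⟫ = 0) : infDist o (mk' p D) = dist o p := by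
  refine le_antisymm (infDist_le_dist_of_mem (self_mem_mk' p D))
    ((le_infDist ⟨p, self_mem_mk' p D⟩).mpr fun q hq => ?_)
  have := dist_sq_eq_of_mem_mk' hD hq
  nlinarith [dist_nonneg (x := o) (y := q), dist_nonneg (x := p) (y := q)]

theorem eq_of_mem_mk'_of_dist_eq (hD : ∀ x ∈ D, ⟪o -ᵥ p, x⟫ = 0) (hq : q ∈ mk' p D)
    (h : dist o q = dist o p) : q = p := by
  have := dist_sq_eq_of_mem_mk' hD hq
  rw [h] at this
  exact (dist_eq_zero.mp (pow_eq_zero_iff two_ne_zero |>.mp (by linarith))).symm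

end Perpendicular

section TangentLine

variable {P : AffineSubspace ℝ Pt} {o : Pt} {ρ : ℝ} {w w' : V}

/-- For `‖w‖ = 1` and `w' ⟂ w`, the tangent line at `ρ • w +ᵥ o` to the circle with centre `o`
and radius `ρ` in the plane of `w` and `w'`. -/
def tangentLine (o : Pt) (ρ : ℝ) (w w' : V) : AffineSubspace ℝ Pt :=
  mk' (ρ • w +ᵥ o) (ℝ ∙ w')

theorem inner_vsub_tangentLine (hww' : ⟪w, w'⟫ = 0) :
    ∀ x ∈ ℝ ∙ w', ⟪o -ᵥ (ρ • w +ᵥ o), x⟫ = 0 := by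
  intro x hx
  obtain ⟨a, rfl⟩ := Submodule.mem_span_singleton.mp hx
  rw [vsub_vadd_eq_vsub_sub, vsub_self, zero_sub, inner_neg_left, inner_smul_left,
    inner_smul_right, hww']
  simp

theorem finrank_direction_tangentLine (hw' : w' ≠ 0) :
    finrank ℝ (tangentLine o ρ w w').direction = 1 := by
  rw [tangentLine, direction_mk', finrank_span_singleton hw']

theorem tangentLine_le (hoP : o ∈ P) (hw : w ∈ P.direction) (hw' : w' ∈ P.direction) :
    tangentLine o ρ w w' ≤ P := by
  have hp : ρ • w +ᵥ o ∈ P := vadd_mem_of_mem_direction (P.direction.smul_mem ρ hw) hoP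
  rw [← mk'_eq hp]
  exact (mk'_le_mk'_iff _).mpr ((Submodule.span_singleton_le_iff_mem _ _).mpr hw')

theorem infDist_tangentLine (hρ : 0 ≤ ρ) (hw : ‖w‖ = 1) (hww' : ⟪w, w'⟫ = 0) :
    infDist o (tangentLine o ρ w w') = ρ := by
  rw [tangentLine, infDist_mk' (inner_vsub_tangentLine hww'), dist_vadd_right, norm_smul, hw,
    mul_one, Real.norm_of_nonneg hρ]

theorem eq_of_tangentLine_eq {w₁ w₁' w₂ w₂' : V} (hρ : ρ ≠ 0) (hw : ‖w₁‖ = ‖w₂‖)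
    (hww' : ⟪w₁, w₁'⟫ = 0) (h : tangentLine o ρ w₁ w₁' = tangentLine o ρ w₂ w₂') : w₁ = w₂ := by
  have hmem : ρ • w₂ +ᵥ o ∈ tangentLine o ρ w₁ w₁' := h ▸ self_mem_mk' _ _
  have := eq_of_mem_mk'_of_dist_eq (inner_vsub_tangentLine hww') hmem
    (by rw [dist_vadd_right, dist_vadd_right, norm_smul, norm_smul, hw])
  exact (smul_right_injective V hρ (vadd_right_cancel o this)).symm

open Real in
theorem infinite_setOf_tangent_lines_ne_direction {D : Submodule ℝ V}
    (hP : finrank ℝ P.direction = 2) (hoP : o ∈ P) (hρ : 0 < ρ) (hD : finrank ℝ D = 1)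
    (hDP : D ≤ P.direction) :
    {L : AffineSubspace ℝ Pt | finrank ℝ L.direction = 1 ∧ L ≤ P ∧ infDist o (L : Set Pt) = ρ ∧
      L.direction ≠ D}.Infinite := by
  have : FiniteDimensional ℝ P.direction := .of_finrank_pos (by omega)
  obtain ⟨u, huD, hu⟩ := D.exists_mem_norm_eq_one (by rintro rfl; simp at hD)
  obtain ⟨v, ⟨hvD, hvP⟩, hv⟩ := (Dᗮ ⊓ P.direction).exists_mem_norm_eq_one fun h => by
    have := Submodule.finrank_add_inf_finrank_orthogonal hDP
    rw [h, hD, hP, finrank_bot] at this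
    omega
  have huv : ⟪u, v⟫ = 0 := Submodule.inner_right_of_mem_orthogonal huD hvD
  have hinner := inner_smul_add_smul_of_orthonormal hu hv huv
  have hcoord : ∀ a b : ℝ, ⟪a • u + b • v, v⟫ = b := fun a b => by
    simpa using hinner a b 0 1
  have hperp : ∀ θ, ⟪cos θ • u + sin θ • v, -sin θ • u + cos θ • v⟫ = 0 := fun θ => by
    rw [hinner]; ring
  have hnorm : ∀ θ, ‖cos θ • u + sin θ • v‖ = 1 := fun θ => by
    rw [norm_eq_sqrt_real_inner, hinner, ← sq, ← sq, cos_sq_add_sin_sq, sqrt_one]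
  have hmem : ∀ a b : ℝ, a • u + b • v ∈ P.direction := fun a b =>
    P.direction.add_mem (P.direction.smul_mem a (hDP huD)) (P.direction.smul_mem b hvP)
  refine infinite_of_injOn_mapsTo (s := Ioo (-(π / 2)) (π / 2))
    (f := fun θ => tangentLine o ρ (cos θ • u + sin θ • v) (-sin θ • u + cos θ • v)) ?_ ?_
    (Ioo_infinite (by linarith [pi_pos]))
  · intro θ hθ θ' hθ' h
    have hw := congrArg (⟪·, v⟫) (eq_of_tangentLine_eq hρ.ne' (by rw [hnorm, hnorm]) (hperp θ) h)
    simp only [hcoord] at hw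
    exact injOn_sin (Ioo_subset_Icc_self hθ) (Ioo_subset_Icc_self hθ') hw
  · intro θ hθ
    have hcos : ⟪-sin θ • u + cos θ • v, v⟫ ≠ 0 :=
      (hcoord _ _).trans_ne (cos_pos_of_mem_Ioo hθ).ne'
    refine ⟨finrank_direction_tangentLine fun h0 => hcos (by rw [h0, inner_zero_left]),
      tangentLine_le hoP (hmem _ _) (hmem _ _), infDist_tangentLine hρ.le (hnorm θ) (hperp θ),
      fun hLD => hcos (Submodule.inner_right_of_mem_orthogonal ?_ hvD)⟩
    rw [← hLD]
    exact (direction_mk' _ _).ge (Submodule.mem_span_singleton_self _)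

end TangentLine

end AffineSubspace

theorem spheres_through_common_circle_general
    (P : AffineSubspace ℝ E3) (hP : IsPlane P)
    (ℓ : AffineSubspace ℝ E3) (hℓ : IsLine ℓ) (hℓP : (ℓ : Set E3) ⊆ (P : Set E3))
    (o : E3) (hoP : o ∈ P) (ρ : ℝ) (hρ : 0 < ρ)
    (c₁ c₂ c₃ : E3) (r₁ r₂ r₃ : ℝ)
    (h₁ : (P : Set E3) ∩ Metric.sphere o ρ ⊆ Metric.sphere c₁ r₁)
    (h₂ : (P : Set E3) ∩ Metric.sphere o ρ ⊆ Metric.sphere c₂ r₂)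
    (h₃ : (P : Set E3) ∩ Metric.sphere o ρ ⊆ Metric.sphere c₃ r₃) :
    (∀ L : AffineSubspace ℝ E3, IsLine L → (L : Set E3) ⊆ (P : Set E3) →
      Metric.infDist o (L : Set E3) = ρ → L.direction ≠ ℓ.direction →
      Meets L ℓ ∧ Tangent c₁ r₁ L ∧ Tangent c₂ r₂ L ∧ Tangent c₃ r₃ L) ∧
    {L : AffineSubspace ℝ E3 | IsLine L ∧ Meets L ℓ ∧
        Tangent c₁ r₁ L ∧ Tangent c₂ r₂ L ∧ Tangent c₃ r₃ L}.Infinite := by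
  have hPne : P.direction ≠ ⊥ := fun h => by
    rw [IsPlane, h, finrank_bot] at hP
    omega
  have htangent : ∀ {c r}, (P : Set E3) ∩ sphere o ρ ⊆ sphere c r → ∀ L : AffineSubspace ℝ E3,
      IsLine L → L ≤ P → infDist o (L : Set E3) = ρ → Tangent c r L :=
    fun h L hL hLP hLo => AffineSubspace.infDist_eq_of_inter_sphere_subset_sphere hoP hρ hPne h
      L.closed_of_finiteDimensional
      (AffineSubspace.nonempty_of_finrank_direction_ne_zero (ne_of_eq_of_ne hL one_ne_zero)) hLP hLo
  have hcommon : ∀ L : AffineSubspace ℝ E3, IsLine L → (L : Set E3) ⊆ (P : Set E3) →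
      Metric.infDist o (L : Set E3) = ρ → L.direction ≠ ℓ.direction →
      Meets L ℓ ∧ Tangent c₁ r₁ L ∧ Tangent c₂ r₂ L ∧ Tangent c₃ r₃ L :=
    fun L hL hLP hLo hLℓ =>
      ⟨AffineSubspace.inter_nonempty_of_finrank_direction_eq_one hLP hℓP hL hℓ hP hLℓ,
        htangent h₁ L hL hLP hLo, htangent h₂ L hL hLP hLo, htangent h₃ L hL hLP hLo⟩
  refine ⟨hcommon, (AffineSubspace.infinite_setOf_tangent_lines_ne_direction hP hoP hρ hℓ
    (AffineSubspace.direction_le hℓP)).mono ?_⟩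
  rintro L ⟨hL, hLP, hLo, hLℓ⟩
  exact ⟨hL, hcommon L hL hLP hLo hLℓ⟩

/-- Three spheres meeting in a common circle whose plane `P` contains the line `ℓ`:
every line of `P` tangent to the circle and not parallel to `ℓ` meets `ℓ` and is
tangent to all three spheres, and the set of such common tangents is infinite. -/
theorem spheres_through_common_circle
    (P : AffineSubspace ℝ E3) (hP : IsPlane P)
    (ℓ : AffineSubspace ℝ E3) (hℓ : IsLine ℓ) (hℓP : (ℓ : Set E3) ⊆ (P : Set E3))
    (o : E3) (hoP : o ∈ P) (ρ : ℝ) (hρ : 0 < ρ)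
    (c₁ c₂ c₃ : E3) (r₁ r₂ r₃ : ℝ)
    (hr₁ : 0 < r₁) (hr₂ : 0 < r₂) (hr₃ : 0 < r₃)
    (h₁ : (P : Set E3) ∩ Metric.sphere o ρ ⊆ Metric.sphere c₁ r₁)
    (h₂ : (P : Set E3) ∩ Metric.sphere o ρ ⊆ Metric.sphere c₂ r₂)
    (h₃ : (P : Set E3) ∩ Metric.sphere o ρ ⊆ Metric.sphere c₃ r₃) :
    (∀ L : AffineSubspace ℝ E3, IsLine L → (L : Set E3) ⊆ (P : Set E3) →
      Metric.infDist o (L : Set E3) = ρ → L.direction ≠ ℓ.direction →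
      Meets L ℓ ∧ Tangent c₁ r₁ L ∧ Tangent c₂ r₂ L ∧ Tangent c₃ r₃ L) ∧
    {L : AffineSubspace ℝ E3 | IsLine L ∧ Meets L ℓ ∧
        Tangent c₁ r₁ L ∧ Tangent c₂ r₂ L ∧ Tangent c₃ r₃ L}.Infinite :=
  spheres_through_common_circle_general P hP ℓ hℓ hℓP o hoP ρ hρ c₁ c₂ c₃ r₁ r₂ r₃ h₁ h₂ h₃
end
end

section
/- Let S₁, S₂, S₃ be spheres in Euclidean 3-space with radii r₁, r₂, r₃ > 0 whose centres c₁, c₂, c₃ all lie on a line m, and let ℓ be a line tangent to each of the three spheres such that ℓ ∩ m = ∅ and the direction of ℓ differs from the direction of m (ℓ and m are skew). Then the set of lines that meet ℓ and are tangent to all three spheres is infinite. -/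
/-!
Reflect `ℓ` in the plane spanned by `m` and a point `x ∈ ℓ`. The reflection fixes `m` pointwise,
so the reflected line stays at distance `rᵢ` from each `cᵢ`, and it passes through `x`, so it
meets `ℓ`. Two points of `ℓ` give the same reflected line only if that line is `ℓ` itself. As `ℓ`
does not lie in the plane (coplanar lines with different directions meet), the reflection then
reverses `ℓ`, so `ℓ` is orthogonal to the plane and in particular to `x - c₁`: this forces `x` to
be the foot of the perpendicular from `c₁` to `ℓ`. Hence `x ↦` (reflected line) is injective on
`ℓ` minus at most one point.
-/

noncomputable section

open EuclideanGeometry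

theorem Submodule.eq_span_singleton_of_finrank_eq_one {k V : Type*} [DivisionRing k]
    [AddCommGroup V] [Module k V] {K : Submodule k V} (hK : Module.finrank k K = 1) {v : V}
    (hv : v ∈ K) (hv0 : v ≠ 0) : K = k ∙ v :=
  haveI := Module.finite_of_finrank_eq_succ hK
  (Submodule.eq_of_le_of_finrank_eq ((Submodule.span_singleton_le_iff_mem v K).2 hv)
    (by rw [finrank_span_singleton hv0, hK])).symm

theorem AffineSubspace.direction_inf_direction_affineSpan_insert_le {k V P : Type*} [Field k]
    [AddCommGroup V] [Module k V] [AddTorsor V P] {s₁ s₂ : AffineSubspace k P}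
    (h : Disjoint (s₁ : Set P) s₂) {x c : P} (hx : x ∈ s₁) (hc : c ∈ s₂) :
    s₁.direction ⊓ (affineSpan k (insert x (s₂ : Set P))).direction ≤ s₂.direction := by
  rintro w ⟨hw₁, hw₂⟩
  rw [SetLike.mem_coe, direction_affineSpan_insert hc, Submodule.mem_sup] at hw₂
  obtain ⟨u, hu, d, hd, rfl⟩ := hw₂
  obtain ⟨b, rfl⟩ := Submodule.mem_span_singleton.1 hu
  rcases eq_or_ne b 0 with rfl | hb
  · simpa using hd
  -- the point `x - b⁻¹ • w` of `s₁` equals `c - b⁻¹ • d`, a point of `s₂`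
  refine absurd ?_ (Set.disjoint_left.1 h
    (vadd_mem_of_mem_direction (s₁.direction.smul_mem (-b⁻¹) hw₁) hx))
  rw [SetLike.mem_coe, ← vsub_right_mem_direction_iff_mem hc, vadd_vsub_assoc,
    show (-b⁻¹) • (b • (x -ᵥ c) + d) + (x -ᵥ c) = (-b⁻¹) • d by
      rw [smul_add, smul_smul, neg_mul, inv_mul_cancel₀ hb]; module]
  exact s₂.direction.smul_mem _ hd

namespace EuclideanGeometry

variable {V P : Type*} [NormedAddCommGroup V] [InnerProductSpace ℝ V] [MetricSpace P]
  [NormedAddTorsor V P] {s : AffineSubspace ℝ P} [Nonempty s] [s.direction.HasOrthogonalProjection]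

theorem infDist_reflection_image_of_mem {c : P} (hc : c ∈ s) (t : Set P) :
    Metric.infDist c (reflection s '' t) = Metric.infDist c t := by
  conv_lhs => rw [← (reflection_eq_self_iff c).2 hc]
  exact Metric.infDist_image (reflection s).isometry

theorem mem_map_reflection_of_mem {ℓ : AffineSubspace ℝ P} {x : P} (hxℓ : x ∈ ℓ) (hxs : x ∈ s) :
    x ∈ ℓ.map (reflection s).toAffineMap :=
  AffineSubspace.mem_map.2 ⟨x, hxℓ, (reflection_eq_self_iff x).2 hxs⟩

theorem le_or_isOrtho_of_map_reflection_eq_self {ℓ : AffineSubspace ℝ P}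
    (hℓ : Module.finrank ℝ ℓ.direction = 1) {x : P} (hxℓ : x ∈ ℓ) (hxs : x ∈ s)
    (h : ℓ.map (reflection s).toAffineMap = ℓ) : ℓ ≤ s ∨ ℓ.direction ⟂ s.direction := by
  set R := s.direction.reflection
  obtain ⟨v, hvℓ, hv0⟩ := Submodule.exists_mem_ne_zero_of_ne_bot
    (fun hbot => by rw [hbot, finrank_bot] at hℓ; exact zero_ne_one hℓ : ℓ.direction ≠ ⊥)
  have hdir := Submodule.eq_span_singleton_of_finrank_eq_one hℓ hvℓ hv0
  have hRv : R v ∈ ℓ.direction := by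
    have : reflection s (v +ᵥ x) ∈ ℓ :=
      h ▸ AffineSubspace.mem_map.2 ⟨_, AffineSubspace.vadd_mem_of_mem_direction hvℓ hxℓ, rfl⟩
    rwa [reflection_apply_of_mem s _ hxs, vadd_vsub,
      AffineSubspace.vadd_mem_iff_mem_direction _ hxℓ] at this
  obtain ⟨t, ht⟩ := Submodule.mem_span_singleton.1 (hdir ▸ hRv)
  have ht2 : t * t = 1 := by
    refine smul_left_injective ℝ hv0 (?_ : (t * t) • v = (1 : ℝ) • v)
    rw [mul_smul, ht, ← map_smul, ht, Submodule.reflection_reflection, one_smul]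
  rcases mul_self_eq_one_iff.1 ht2 with rfl | rfl
  · left
    rw [← AffineSubspace.mk'_eq hxℓ, ← AffineSubspace.mk'_eq hxs,
      AffineSubspace.mk'_le_mk'_iff, hdir, Submodule.span_singleton_le_iff_mem,
      ← Submodule.reflection_eq_self_iff, ← ht, one_smul]
  · right
    rw [Submodule.isOrtho_iff_le, hdir, Submodule.span_singleton_le_iff_mem,
      ← Submodule.reflection_eq_self_iff, Submodule.reflection_orthogonal_apply, ← ht,
      neg_one_smul, neg_neg]

end EuclideanGeometry

theorem AffineSubspace.eq_of_vsub_mem_orthogonal {V P : Type*} [NormedAddCommGroup V]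
    [InnerProductSpace ℝ V] [MetricSpace P] [NormedAddTorsor V P] {ℓ : AffineSubspace ℝ P}
    {c x y : P} (hx : x ∈ ℓ) (hy : y ∈ ℓ) (hxc : x -ᵥ c ∈ ℓ.directionᗮ)
    (hyc : y -ᵥ c ∈ ℓ.directionᗮ) : x = y := by
  have : x -ᵥ y ∈ ℓ.direction ⊓ ℓ.directionᗮ :=
    ⟨ℓ.vsub_mem_direction hx hy, vsub_sub_vsub_cancel_right x y c ▸ Submodule.sub_mem _ hxc hyc⟩
  rwa [Submodule.inf_orthogonal_eq_bot, Submodule.mem_bot, vsub_eq_zero_iff_eq] at this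

namespace IsLine

variable {L L' : AffineSubspace ℝ E3}

theorem direction_ne_bot (hL : IsLine L) : L.direction ≠ ⊥ := fun h => by
  rw [IsLine, h, finrank_bot] at hL; exact zero_ne_one hL

theorem eq_of_mem_of_mem (hL : IsLine L) (hL' : IsLine L') {x y : E3} (hxy : x ≠ y)
    (hxL : x ∈ L) (hyL : y ∈ L) (hxL' : x ∈ L') (hyL' : y ∈ L') : L = L' := by
  have hyx : y -ᵥ x ≠ 0 := vsub_ne_zero.2 hxy.symm
  refine AffineSubspace.ext_of_direction_eq ?_ ⟨x, hxL, hxL'⟩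
  rw [Submodule.eq_span_singleton_of_finrank_eq_one hL (L.vsub_mem_direction hyL hxL) hyx,
    Submodule.eq_span_singleton_of_finrank_eq_one hL' (L'.vsub_mem_direction hyL' hxL') hyx]

theorem infinite (hL : IsLine L) : (L : Set E3).Infinite := by
  obtain ⟨v, hv, hv0⟩ := Submodule.exists_mem_ne_zero_of_ne_bot hL.direction_ne_bot
  obtain ⟨b, hb⟩ : (L : Set E3).Nonempty := (AffineSubspace.nonempty_iff_ne_bot L).2
    fun h => hL.direction_ne_bot (h ▸ AffineSubspace.direction_bot ℝ E3 E3)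
  refine Set.infinite_of_injective_forall_mem (f := fun t : ℝ => t • v +ᵥ b) ?_
    fun t => AffineSubspace.vadd_mem_of_mem_direction (L.direction.smul_mem t hv) hb
  intro t t' h
  exact smul_left_injective ℝ hv0 (vadd_right_cancel b h)

end IsLine

def reflectedLine (m ℓ : AffineSubspace ℝ E3) (x : E3) : AffineSubspace ℝ E3 :=
  ℓ.map (reflection (affineSpan ℝ (insert x (m : Set E3)))).toAffineMap

section ReflectedLine

variable {m ℓ : AffineSubspace ℝ E3}

theorem isLine_reflectedLine (hℓ : IsLine ℓ) (x : E3) : IsLine (reflectedLine m ℓ x) := by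
  rw [IsLine, reflectedLine, AffineSubspace.map_direction, ← hℓ]
  exact (reflection _).toAffineEquiv.linear.finrank_map_eq ℓ.direction

theorem mem_reflectedLine {x : E3} (hx : x ∈ ℓ) : x ∈ reflectedLine m ℓ x :=
  mem_map_reflection_of_mem hx (mem_affineSpan ℝ (Set.mem_insert x _))

theorem tangent_reflectedLine {c : E3} {r : ℝ} (hc : c ∈ m) (hT : Tangent c r ℓ) (x : E3) :
    Tangent c r (reflectedLine m ℓ x) := by
  rw [Tangent, reflectedLine, AffineSubspace.coe_map, AffineEquiv.coe_toAffineMap,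
    AffineIsometryEquiv.coe_toAffineEquiv,
    infDist_reflection_image_of_mem (mem_affineSpan ℝ (Set.mem_insert_of_mem x hc))]
  exact hT

theorem vsub_mem_orthogonal_of_reflectedLine_eq (hm : IsLine m) (hℓ : IsLine ℓ)
    (hskew₁ : Disjoint (ℓ : Set E3) m) (hskew₂ : ℓ.direction ≠ m.direction)
    {c x : E3} (hc : c ∈ m) (hx : x ∈ ℓ) (h : reflectedLine m ℓ x = ℓ) :
    x -ᵥ c ∈ ℓ.directionᗮ := by
  set plane := affineSpan ℝ (insert x (m : Set E3))
  rcases le_or_isOrtho_of_map_reflection_eq_self hℓ hx (mem_affineSpan ℝ (Set.mem_insert x _)) h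
    with hle | hortho
  · -- `ℓ` and `m` would be coplanar lines with distinct directions, hence meeting
    refine absurd (Submodule.eq_of_le_of_finrank_eq ?_ (hℓ.trans hm.symm)) hskew₂
    exact le_inf le_rfl (AffineSubspace.direction_le hle) |>.trans
      (AffineSubspace.direction_inf_direction_affineSpan_insert_le hskew₁ hx hc)
  · exact Submodule.isOrtho_iff_le.1 hortho.symm <| plane.vsub_mem_direction
      (mem_affineSpan ℝ (Set.mem_insert x _)) (mem_affineSpan ℝ (Set.mem_insert_of_mem x hc))

end ReflectedLine

theorem collinear_centres_tangent_line_general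
    (c₁ c₂ c₃ : E3) (r₁ r₂ r₃ : ℝ)
    (m : AffineSubspace ℝ E3) (hm : IsLine m)
    (hc₁ : c₁ ∈ m) (hc₂ : c₂ ∈ m) (hc₃ : c₃ ∈ m)
    (ℓ : AffineSubspace ℝ E3) (hℓ : IsLine ℓ)
    (hT₁ : Tangent c₁ r₁ ℓ) (hT₂ : Tangent c₂ r₂ ℓ) (hT₃ : Tangent c₃ r₃ ℓ)
    (hskew₁ : ((ℓ : Set E3) ∩ (m : Set E3)) = ∅)
    (hskew₂ : ℓ.direction ≠ m.direction) :
    {L : AffineSubspace ℝ E3 | IsLine L ∧ Meets L ℓ ∧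
        Tangent c₁ r₁ L ∧ Tangent c₂ r₂ L ∧ Tangent c₃ r₃ L}.Infinite := by
  have hdisj : Disjoint (ℓ : Set E3) m := Set.disjoint_iff_inter_eq_empty.2 hskew₁
  set bad := {x | x ∈ ℓ ∧ reflectedLine m ℓ x = ℓ}
  have hbad : bad.Subsingleton := fun x ⟨hx, hxℓ⟩ y ⟨hy, hyℓ⟩ =>
    AffineSubspace.eq_of_vsub_mem_orthogonal hx hy
      (vsub_mem_orthogonal_of_reflectedLine_eq hm hℓ hdisj hskew₂ hc₁ hx hxℓ)
      (vsub_mem_orthogonal_of_reflectedLine_eq hm hℓ hdisj hskew₂ hc₁ hy hyℓ)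
  refine Set.infinite_of_injOn_mapsTo (f := reflectedLine m ℓ) (s := (ℓ : Set E3) \ bad)
    ?_ ?_ (hℓ.infinite.sdiff hbad.finite)
  · rintro x ⟨hx, hx_good⟩ y ⟨hy, -⟩ hxy
    by_contra hne
    exact hx_good ⟨hx, (isLine_reflectedLine hℓ x).eq_of_mem_of_mem hℓ hne
      (mem_reflectedLine hx) (hxy ▸ mem_reflectedLine hy) hx hy⟩
  · rintro x ⟨hx, -⟩
    exact ⟨isLine_reflectedLine hℓ x, ⟨x, mem_reflectedLine hx, hx⟩,
      tangent_reflectedLine hc₁ hT₁ x, tangent_reflectedLine hc₂ hT₂ x,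
      tangent_reflectedLine hc₃ hT₃ x⟩

/-- Three spheres with collinear centres, and a line `ℓ` tangent to all three and skew
to the line `m` of centres: the set of lines meeting `ℓ` and tangent to all three
spheres is infinite (one ruling of the hyperboloid of revolution generated by `ℓ`). -/
theorem collinear_centres_tangent_line
    (c₁ c₂ c₃ : E3) (r₁ r₂ r₃ : ℝ)
    (hr₁ : 0 < r₁) (hr₂ : 0 < r₂) (hr₃ : 0 < r₃)
    (m : AffineSubspace ℝ E3) (hm : IsLine m)
    (hc₁ : c₁ ∈ m) (hc₂ : c₂ ∈ m) (hc₃ : c₃ ∈ m)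
    (ℓ : AffineSubspace ℝ E3) (hℓ : IsLine ℓ)
    (hT₁ : Tangent c₁ r₁ ℓ) (hT₂ : Tangent c₂ r₂ ℓ) (hT₃ : Tangent c₃ r₃ ℓ)
    (hskew₁ : ((ℓ : Set E3) ∩ (m : Set E3)) = ∅)
    (hskew₂ : ℓ.direction ≠ m.direction) :
    {L : AffineSubspace ℝ E3 | IsLine L ∧ Meets L ℓ ∧
        Tangent c₁ r₁ L ∧ Tangent c₂ r₂ L ∧ Tangent c₃ r₃ L}.Infinite :=
  collinear_centres_tangent_line_general c₁ c₂ c₃ r₁ r₂ r₃ m hm hc₁ hc₂ hc₃ ℓ hℓ hT₁ hT₂ hT₃ hskew₁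
    hskew₂
end
end

section
/- Let S₁ = S(c₁,r₁) and S₂ = S(c₂,r₂) be spheres in Euclidean 3-space with r₁, r₂ > 0, and let p be a point. For i = 1,2 let Tᵢ be the set of lines through p tangent to Sᵢ. If T₁ ≠ T₂ (the tangent cones to the two spheres with apex p are distinct), then T₁ ∩ T₂, the set of lines through p tangent to both spheres, is finite and has at most 4 elements. -/
noncomputable section

open RealInnerProductSpace Metric Module Submodule

lemma exists_unit_direction (L : AffineSubspace ℝ E3) (hL : IsLine L) :
    ∃ v : E3, ‖v‖ = 1 ∧ L.direction = Submodule.span ℝ {v} := by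
  have h3 : FiniteDimensional ℝ E3 := by infer_instance
  have hpos : 0 < Module.rank ℝ L.direction := by
    rw [← Module.finrank_eq_rank]
    exact_mod_cast by rw [hL]; norm_num
  obtain ⟨v, hv, hv0⟩ := exists_mem_ne_zero_of_rank_pos hpos
  have hspan : Submodule.span ℝ {v} = L.direction := by
    apply Submodule.eq_of_le_of_finrank_eq
    · simpa [Submodule.span_le] using hv
    · rw [finrank_span_singleton hv0, hL]
  refine ⟨‖v‖⁻¹ • v, ?_, ?_⟩
  · simp [norm_smul, inv_mul_cancel₀ (norm_ne_zero_iff.mpr hv0)]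
  · rw [← hspan]
    rw [Submodule.span_singleton_smul_eq]
    exact (isUnit_iff_ne_zero.mpr (inv_ne_zero (norm_ne_zero_iff.mpr hv0)))

lemma mem_line_iff (L : AffineSubspace ℝ E3) (p : E3) (hp : p ∈ L) (v : E3)
    (hd : L.direction = Submodule.span ℝ {v}) (x : E3) :
    x ∈ L ↔ ∃ s : ℝ, x = s • v + p := by
  rw [← AffineSubspace.vsub_right_mem_direction_iff_mem hp, hd,
    Submodule.mem_span_singleton]
  constructor
  · rintro ⟨s, hs⟩; exact ⟨s, by rw [hs]; simp [vsub_eq_sub]⟩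
  · rintro ⟨s, hs⟩; exact ⟨s, by simp [hs, vsub_eq_sub]⟩

lemma key_expand (u v : E3) (hv : ‖v‖ = 1) (s : ℝ) :
    ‖u - s • v‖^2 = (s - ⟪u,v⟫)^2 + (‖u‖^2 - ⟪u,v⟫^2) := by
  rw [norm_sub_sq_real, real_inner_smul_right, norm_smul]
  simp [hv]
  ring

lemma infDist_line (c p v : E3) (hv : ‖v‖ = 1) (L : AffineSubspace ℝ E3)
    (hp : p ∈ L) (hd : L.direction = Submodule.span ℝ {v}) :
    Metric.infDist c (L : Set E3) = Real.sqrt (‖c - p‖^2 - ⟪c - p, v⟫^2) := by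
  set u := c - p with hu
  set t := ⟪u, v⟫ with ht
  have hA : 0 ≤ ‖u‖^2 - t^2 := by
    have := key_expand u v hv t
    nlinarith [sq_nonneg (‖u - t • v‖)]
  have hmem : (t • v + p) ∈ L := (mem_line_iff L p hp v hd _).2 ⟨t, rfl⟩
  apply le_antisymm
  · calc Metric.infDist c (L : Set E3) ≤ dist c (t • v + p) :=
          Metric.infDist_le_dist_of_mem hmem
      _ = Real.sqrt (‖u‖^2 - t^2) := by
          rw [dist_eq_norm]
          have : c - (t • v + p) = u - t • v := by rw [hu]; abel
          rw [this, ← Real.sqrt_sq (norm_nonneg (u - t • v)), key_expand u v hv]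
          congr 1
          rw [← ht]; ring
  · rw [Metric.infDist_eq_iInf]
    haveI : Nonempty (L : Set E3) := ⟨⟨p, hp⟩⟩
    apply le_ciInf
    rintro ⟨y, hy⟩
    obtain ⟨s, rfl⟩ := (mem_line_iff L p hp v hd y).1 hy
    rw [dist_eq_norm]
    have h1 : c - (s • v + p) = u - s • v := by rw [hu]; abel
    rw [h1, ← Real.sqrt_sq (norm_nonneg (u - s • v)), key_expand u v hv]
    exact Real.sqrt_le_sqrt (by nlinarith [sq_nonneg (s - t)])

lemma tangent_iff (c p : E3) (r : ℝ) (hr : 0 < r) (v : E3) (hv : ‖v‖ = 1)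
    (L : AffineSubspace ℝ E3) (hp : p ∈ L) (hd : L.direction = Submodule.span ℝ {v}) :
    Tangent c r L ↔ ⟪c - p, v⟫^2 = ‖c - p‖^2 - r^2 := by
  have hA : 0 ≤ ‖c - p‖^2 - ⟪c - p, v⟫^2 := by
    have := key_expand (c - p) v hv ⟪c - p, v⟫
    nlinarith [sq_nonneg (‖(c - p) - ⟪c - p, v⟫ • v‖)]
  rw [Tangent, infDist_line c p v hv L hp hd]
  constructor
  · intro h
    have : ‖c - p‖^2 - ⟪c - p, v⟫^2 = r^2 := by
      rw [← Real.sq_sqrt hA, h]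
    linarith
  · intro h
    have : ‖c - p‖^2 - ⟪c - p, v⟫^2 = r^2 := by linarith
    rw [this, Real.sqrt_sq hr.le]

lemma submodule_rank_one (K : Submodule ℝ E3) (hK : Module.finrank ℝ K = 1) :
    ∃ e : E3, e ≠ 0 ∧ K = Submodule.span ℝ {e} := by
  have hpos : 0 < Module.rank ℝ K := by
    rw [← Module.finrank_eq_rank]
    exact_mod_cast by rw [hK]; norm_num
  obtain ⟨e, he, he0⟩ := exists_mem_ne_zero_of_rank_pos hpos
  refine ⟨e, he0, ?_⟩
  symm
  apply Submodule.eq_of_le_of_finrank_eq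
  · simpa [Submodule.span_le] using he
  · rw [finrank_span_singleton he0, hK]

lemma two_point (u₁ u₂ : E3) (h : LinearIndependent ℝ ![u₁, u₂]) (α β : ℝ) :
    ∃ a b : E3, {v : E3 | ‖v‖ = 1 ∧ ⟪u₁, v⟫ = α ∧ ⟪u₂, v⟫ = β} ⊆ {a, b} := by
  set S := {v : E3 | ‖v‖ = 1 ∧ ⟪u₁, v⟫ = α ∧ ⟪u₂, v⟫ = β} with hS
  rcases S.eq_empty_or_nonempty with hemp | ⟨v₀, hv₀⟩
  · exact ⟨0, 0, by simp [hemp]⟩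
  have hrange : Set.range ![u₁, u₂] = {u₁, u₂} := by
    simp [Matrix.range_cons, Matrix.range_empty, Set.pair_comm]
  have hspan2 : Module.finrank ℝ (Submodule.span ℝ ({u₁, u₂} : Set E3)) = 2 := by
    rw [← hrange, finrank_span_eq_card h]
    simp
  have hK1 : Module.finrank ℝ ((Submodule.span ℝ ({u₁, u₂} : Set E3))ᗮ) = 1 := by
    have := Submodule.finrank_add_finrank_orthogonal (Submodule.span ℝ ({u₁, u₂} : Set E3))
    have h3 : Module.finrank ℝ E3 = 3 := by simp [finrank_euclideanSpace]
    rw [hspan2, h3] at this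
    omega
  obtain ⟨e, he0, hKe⟩ := submodule_rank_one _ hK1
  have hmemK : ∀ v ∈ S, v - v₀ ∈ (Submodule.span ℝ ({u₁, u₂} : Set E3))ᗮ := by
    intro v hv
    rw [Submodule.mem_orthogonal]
    intro w hw
    obtain ⟨cc, dd, rfl⟩ := Submodule.mem_span_pair.1 hw
    rw [inner_add_left, real_inner_smul_left, real_inner_smul_left,
      inner_sub_right, inner_sub_right, hv.2.1, hv.2.2, hv₀.2.1, hv₀.2.2]
    ring
  have he2 : (0:ℝ) < ‖e‖^2 := by have := norm_pos_iff.mpr he0; positivity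
  refine ⟨v₀, v₀ + (-2 * ⟪v₀, e⟫ / ‖e‖^2) • e, ?_⟩
  intro v hv
  obtain ⟨s, hs⟩ := Submodule.mem_span_singleton.1 (hKe ▸ hmemK v hv)
  have hveq : v = v₀ + s • e := by rw [hs]; abel
  have hnorm : ‖v₀ + s • e‖^2 = ‖v₀‖^2 + 2 * (s * ⟪v₀, e⟫) + s^2 * ‖e‖^2 := by
    rw [norm_add_sq_real, real_inner_smul_right, norm_smul, mul_pow, Real.norm_eq_abs, sq_abs]
  have hq : s * (s * ‖e‖^2 + 2 * ⟪v₀, e⟫) = 0 := by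
    have h1 : ‖v‖ = 1 := hv.1
    have h2 : ‖v₀‖ = 1 := hv₀.1
    rw [hveq] at h1
    have := hnorm
    rw [h1, h2] at this
    nlinarith [this]
  rcases mul_eq_zero.1 hq with h0 | h0
  · left; rw [hveq, h0]; simp
  · right; rw [hveq]
    congr 1
    congr 1
    rw [eq_div_iff he2.ne']
    linarith

lemma span_neg_singleton (v : E3) :
    Submodule.span ℝ ({-v} : Set E3) = Submodule.span ℝ {v} := by
  rw [show ({-v} : Set E3) = -{v} from (Set.neg_singleton v).symm, Submodule.span_neg]

/-- If the tangent cones with apex `p` to two spheres are distinct, then there are at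
most four common tangent lines to the two spheres through `p`. -/
theorem common_tangents_through_point
    (c₁ c₂ : E3) (r₁ r₂ : ℝ) (hr₁ : 0 < r₁) (hr₂ : 0 < r₂) (p : E3)
    (hne : {L : AffineSubspace ℝ E3 | IsLine L ∧ p ∈ L ∧ Tangent c₁ r₁ L} ≠
           {L : AffineSubspace ℝ E3 | IsLine L ∧ p ∈ L ∧ Tangent c₂ r₂ L}) :
    ({L : AffineSubspace ℝ E3 | IsLine L ∧ p ∈ L ∧ Tangent c₁ r₁ L} ∩
      {L : AffineSubspace ℝ E3 | IsLine L ∧ p ∈ L ∧ Tangent c₂ r₂ L}).Finite ∧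
    ({L : AffineSubspace ℝ E3 | IsLine L ∧ p ∈ L ∧ Tangent c₁ r₁ L} ∩
      {L : AffineSubspace ℝ E3 | IsLine L ∧ p ∈ L ∧ Tangent c₂ r₂ L}).ncard ≤ 4 := by
  classical
  set S := ({L : AffineSubspace ℝ E3 | IsLine L ∧ p ∈ L ∧ Tangent c₁ r₁ L} ∩
      {L : AffineSubspace ℝ E3 | IsLine L ∧ p ∈ L ∧ Tangent c₂ r₂ L}) with hSdef
  rcases S.eq_empty_or_nonempty with hemp | ⟨L₀, hL₀⟩
  · rw [hemp]; simp
  obtain ⟨⟨hline₀, hp₀, htan₀1⟩, ⟨-, -, htan₀2⟩⟩ := hL₀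
  obtain ⟨v₀, hv₀, hd₀⟩ := exists_unit_direction L₀ hline₀
  have ht1 : ⟪c₁ - p, v₀⟫^2 = ‖c₁ - p‖^2 - r₁^2 :=
    (tangent_iff c₁ p r₁ hr₁ v₀ hv₀ L₀ hp₀ hd₀).1 htan₀1
  have ht2 : ⟪c₂ - p, v₀⟫^2 = ‖c₂ - p‖^2 - r₂^2 :=
    (tangent_iff c₂ p r₂ hr₂ v₀ hv₀ L₀ hp₀ hd₀).1 htan₀2
  have ha₁ : 0 ≤ ‖c₁ - p‖^2 - r₁^2 := ht1 ▸ sq_nonneg _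
  have ha₂ : 0 ≤ ‖c₂ - p‖^2 - r₂^2 := ht2 ▸ sq_nonneg _
  have hu₁ : c₁ - p ≠ 0 := by
    intro h; rw [h] at ha₁; simp at ha₁; nlinarith
  have hu₂ : c₂ - p ≠ 0 := by
    intro h; rw [h] at ha₂; simp at ha₂; nlinarith
  by_cases hind : LinearIndependent ℝ ![c₁ - p, c₂ - p]
  · -- independent case
    obtain ⟨a, b, hAB⟩ := two_point (c₁ - p) (c₂ - p) hind
      (Real.sqrt (‖c₁ - p‖^2 - r₁^2)) (Real.sqrt (‖c₂ - p‖^2 - r₂^2))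
    obtain ⟨a', b', hAB'⟩ := two_point (c₁ - p) (c₂ - p) hind
      (Real.sqrt (‖c₁ - p‖^2 - r₁^2)) (-Real.sqrt (‖c₂ - p‖^2 - r₂^2))
    have hex : ∀ L, L ∈ S → ∃ v : E3, ‖v‖ = 1 ∧
        L.direction = Submodule.span ℝ {v} ∧ 0 ≤ ⟪c₁ - p, v⟫ := by
      intro L hL
      obtain ⟨v, hv, hd⟩ := exists_unit_direction L hL.1.1
      rcases le_or_gt 0 ⟪c₁ - p, v⟫ with hsgn | hsgn
      · exact ⟨v, hv, hd, hsgn⟩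
      · refine ⟨-v, by simpa using hv, ?_, by rw [inner_neg_right]; linarith⟩
        rw [hd, span_neg_singleton]
    choose! f hf using hex
    have hinj : Set.InjOn f S := by
      intro L hL L' hL' heq
      obtain ⟨-, hdL, -⟩ := hf L hL
      obtain ⟨-, hdL', -⟩ := hf L' hL'
      exact AffineSubspace.ext_of_direction_eq (by rw [hdL, hdL', heq])
        ⟨p, hL.1.2.1, hL'.1.2.1⟩
    have himg : f '' S ⊆ ({a, b} : Set E3) ∪ {a', b'} := by
      rintro - ⟨L, hL, rfl⟩
      obtain ⟨hv, hd, hpos⟩ := hf L hL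
      have h1 : ⟪c₁ - p, f L⟫^2 = ‖c₁ - p‖^2 - r₁^2 :=
        (tangent_iff c₁ p r₁ hr₁ (f L) hv L hL.1.2.1 hd).1 hL.1.2.2
      have h2 : ⟪c₂ - p, f L⟫^2 = ‖c₂ - p‖^2 - r₂^2 :=
        (tangent_iff c₂ p r₂ hr₂ (f L) hv L hL.1.2.1 hd).1 hL.2.2.2
      have e1 : ⟪c₁ - p, f L⟫ = Real.sqrt (‖c₁ - p‖^2 - r₁^2) := by
        rw [← h1, Real.sqrt_sq hpos]
      have e2 : ⟪c₂ - p, f L⟫ = Real.sqrt (‖c₂ - p‖^2 - r₂^2) ∨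
          ⟪c₂ - p, f L⟫ = -Real.sqrt (‖c₂ - p‖^2 - r₂^2) := by
        apply sq_eq_sq_iff_eq_or_eq_neg.1
        rw [Real.sq_sqrt ha₂, h2]
      rcases e2 with e2 | e2
      · exact Or.inl (hAB ⟨hv, e1, e2⟩)
      · exact Or.inr (hAB' ⟨hv, e1, e2⟩)
    have hbig : (({a, b} : Set E3) ∪ {a', b'}).Finite := by
      apply Set.Finite.union <;> exact (Set.finite_singleton _).insert _
    constructor
    · exact Set.Finite.of_finite_image (hbig.subset himg) hinj
    · calc S.ncard = (f '' S).ncard := (Set.ncard_image_of_injOn hinj).symm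
        _ ≤ (({a, b} : Set E3) ∪ {a', b'}).ncard := Set.ncard_le_ncard himg hbig
        _ ≤ 4 := by
            rw [Set.insert_union, Set.singleton_union]
            have h1 := Set.ncard_insert_le a (insert b ({a', b'} : Set E3))
            have h2 := Set.ncard_insert_le b ({a', b'} : Set E3)
            have h3 := Set.ncard_insert_le a' ({b'} : Set E3)
            have h4 : ({b'} : Set E3).ncard = 1 := Set.ncard_singleton b'
            omega
  · -- dependent case: the two tangent cones coincide, contradiction
    exfalso
    apply hne
    obtain ⟨t, htU⟩ : ∃ t : ℝ, t • (c₁ - p) = c₂ - p := by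
      by_contra hc
      push_neg at hc
      exact hind ((LinearIndependent.pair_iff' hu₁).2 hc)
    have ht0 : t ≠ 0 := by
      rintro rfl; rw [zero_smul] at htU; exact hu₂ htU.symm
    have hkey : ‖c₂ - p‖^2 - r₂^2 = t^2 * (‖c₁ - p‖^2 - r₁^2) := by
      rw [← ht1, ← ht2, ← htU, real_inner_smul_left]; ring
    ext L
    simp only [Set.mem_setOf_eq]
    constructor
    · rintro ⟨hl, hpL, htan⟩
      refine ⟨hl, hpL, ?_⟩
      obtain ⟨v, hv, hd⟩ := exists_unit_direction L hl
      rw [tangent_iff c₂ p r₂ hr₂ v hv L hpL hd]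
      rw [tangent_iff c₁ p r₁ hr₁ v hv L hpL hd] at htan
      rw [hkey, ← htU, real_inner_smul_left, mul_pow, htan]
    · rintro ⟨hl, hpL, htan⟩
      refine ⟨hl, hpL, ?_⟩
      obtain ⟨v, hv, hd⟩ := exists_unit_direction L hl
      rw [tangent_iff c₁ p r₁ hr₁ v hv L hpL hd]
      rw [tangent_iff c₂ p r₂ hr₂ v hv L hpL hd] at htan
      rw [hkey, ← htU, real_inner_smul_left, mul_pow] at htan
      exact mul_left_cancel₀ (pow_ne_zero 2 ht0) htan
end
end

section
/- Let S₁, S₂ be spheres in Euclidean 3-space with radii r₁, r₂ > 0, let ℓ be a line, let Π be a plane and p ∈ Π a point. Suppose that infinitely many lines L with L ⊆ Π and p ∈ L are tangent to both S₁ and S₂ and meet ℓ. Then S₁ ∩ Π = {p} and S₂ ∩ Π = {p} (both spheres are tangent to Π at the point p), and moreover p ∈ ℓ or ℓ ⊆ Π. -/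
/-!
For a line `L = line[p, x]` through `p` in the plane `P`, with `dist x p = 1`, Pythagoras gives
`infDist c L ^ 2 = dist c p ^ 2 - ⟪q -ᵥ p, x -ᵥ p⟫ ^ 2`, where `q` is the foot of `c` on `P`.
Choosing the sign of `x -ᵥ p` so that the inner product is nonnegative, tangency to `S(c, r)`
fixes `⟪q -ᵥ p, x -ᵥ p⟫`, hence also `dist x q`. If `q ≠ p`, the point `x` thus lies on two
circles of `P` with distinct centres `p` and `q`, so only finitely many lines occur. Hence
`q = p`, and tangency of any one line forces `dist c p = r`: the sphere touches `P` at `p`.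
Finally, if `p ∉ ℓ` and `ℓ ⊄ P`, the line `ℓ` meets `P` in at most one point `x ≠ p`, and the
only line through `p` meeting `ℓ` inside `P` is `line[p, x]`.
-/

noncomputable section

open Module EuclideanGeometry AffineSubspace
open scoped RealInnerProductSpace

section Affine

variable {k V P : Type*} [DivisionRing k] [AddCommGroup V] [Module k V] [AddTorsor V P]

theorem AffineSubspace.affineSpan_pair_eq_of_finrank_direction_eq_one {s : AffineSubspace k P}
    (hs : finrank k s.direction = 1) {p₁ p₂ : P} (hp₁ : p₁ ∈ s) (hp₂ : p₂ ∈ s) (h : p₁ ≠ p₂) :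
    line[k, p₁, p₂] = s := by
  have : FiniteDimensional k s.direction := Module.finite_of_finrank_eq_succ hs
  have hle : line[k, p₁, p₂] ≤ s := affineSpan_pair_le_of_mem_of_mem hp₁ hp₂
  refine eq_of_direction_eq_of_nonempty_of_le ?_ ⟨p₁, left_mem_affineSpan_pair k p₁ p₂⟩ hle
  apply Submodule.eq_of_le_of_finrank_eq (direction_le hle)
  rw [direction_affineSpan, vectorSpan_pair, hs, finrank_span_singleton (vsub_ne_zero.2 h)]

theorem AffineSubspace.inter_subsingleton_of_finrank_direction_eq_one {s t : AffineSubspace k P}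
    (hs : finrank k s.direction = 1) (hst : ¬s ≤ t) : ((s : Set P) ∩ t).Subsingleton := by
  rintro x ⟨hxs, hxt⟩ y ⟨hys, hyt⟩
  by_contra hxy
  apply hst
  rw [← affineSpan_pair_eq_of_finrank_direction_eq_one hs hxs hys hxy]
  exact affineSpan_pair_le_of_mem_of_mem hxt hyt

theorem mem_or_le_of_infinite_lines_meet {ℓ T : AffineSubspace k P}
    (hℓ : finrank k ℓ.direction = 1) {p : P}
    (h : {L : AffineSubspace k P | finrank k L.direction = 1 ∧ L ≤ T ∧ p ∈ L ∧
      ((L : Set P) ∩ ℓ).Nonempty}.Infinite) :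
    p ∈ ℓ ∨ ℓ ≤ T := by
  by_contra! ⟨hpℓ, hℓT⟩
  refine h (Set.Subsingleton.finite ?_)
  rintro L₁ ⟨hL₁, hL₁T, hpL₁, x, hxL₁, hxℓ⟩ L₂ ⟨hL₂, hL₂T, hpL₂, y, hyL₂, hyℓ⟩
  obtain rfl : x = y :=
    inter_subsingleton_of_finrank_direction_eq_one hℓ hℓT ⟨hxℓ, hL₁T hxL₁⟩ ⟨hyℓ, hL₂T hyL₂⟩
  have hpx : p ≠ x := fun h ↦ hpℓ (h ▸ hxℓ)
  rw [← affineSpan_pair_eq_of_finrank_direction_eq_one hL₁ hpL₁ hxL₁ hpx,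
    ← affineSpan_pair_eq_of_finrank_direction_eq_one hL₂ hpL₂ hyL₂ hpx]

end Affine

section Euclidean

variable {V P : Type*} [NormedAddCommGroup V] [InnerProductSpace ℝ V] [MetricSpace P]
  [NormedAddTorsor V P]

theorem infDist_affineSpan_pair_sq {c p x : P} (hx : dist x p = 1) :
    Metric.infDist c line[ℝ, p, x] ^ 2 = dist c p ^ 2 - ⟪c -ᵥ p, x -ᵥ p⟫ ^ 2 := by
  set t := ⟪c -ᵥ p, x -ᵥ p⟫
  have hv : ‖x -ᵥ p‖ = 1 := by rwa [← dist_eq_norm_vsub]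
  have hfoot : (orthogonalProjection line[ℝ, p, x] c : P) = t • (x -ᵥ p) +ᵥ p := by
    rw [coe_orthogonalProjection_eq_iff_mem, direction_affineSpan, vectorSpan_pair,
      Submodule.mem_orthogonal_singleton_iff_inner_right]
    refine ⟨?_, ?_⟩
    · rw [← AffineMap.lineMap_apply]
      exact AffineMap.lineMap_mem_affineSpan_pair t p x
    rw [vsub_vadd_eq_vsub_sub, ← neg_vsub_eq_vsub_rev x p, inner_neg_left,
      inner_sub_right, real_inner_smul_right, real_inner_self_eq_norm_sq, hv, real_inner_comm]
    ring
  rw [← dist_orthogonalProjection_eq_infDist, hfoot, dist_eq_norm_vsub V, dist_eq_norm_vsub V,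
    vsub_vadd_eq_vsub_sub, norm_sub_sq_real, real_inner_smul_right, norm_smul, hv,
    Real.norm_eq_abs, mul_one, sq_abs]
  ring

theorem exists_affineSpan_pair_eq_of_finrank_direction_eq_one {s : AffineSubspace ℝ P}
    (hs : finrank ℝ s.direction = 1) {p : P} (hp : p ∈ s) (w : V) :
    ∃ x, line[ℝ, p, x] = s ∧ dist x p = 1 ∧ 0 ≤ ⟪w, x -ᵥ p⟫ := by
  have hbot : s.direction ≠ ⊥ := fun h ↦ by rw [h, finrank_bot] at hs; exact zero_ne_one hs
  obtain ⟨v, hvs, hv, hwv⟩ : ∃ v ∈ s.direction, v ≠ 0 ∧ 0 ≤ ⟪w, v⟫ := by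
    obtain ⟨v, hvs, hv⟩ := Submodule.exists_mem_ne_zero_of_ne_bot hbot
    rcases le_total 0 ⟪w, v⟫ with h | h
    · exact ⟨v, hvs, hv, h⟩
    · exact ⟨-v, s.direction.neg_mem hvs, neg_ne_zero.2 hv, by rwa [inner_neg_right, neg_nonneg]⟩
  have hu : ‖‖v‖⁻¹ • v‖ = 1 := norm_smul_inv_norm hv
  have hus : ‖v‖⁻¹ • v ∈ s.direction := s.direction.smul_mem _ hvs
  refine ⟨(‖v‖⁻¹ • v) +ᵥ p, ?_, by rw [dist_vadd_left, hu], ?_⟩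
  · refine affineSpan_pair_eq_of_finrank_direction_eq_one hs hp
      (vadd_mem_of_mem_direction hus hp) fun h ↦ ?_
    rw [← vadd_vsub (‖v‖⁻¹ • v) p, ← h, vsub_self, norm_zero] at hu
    exact zero_ne_one hu
  · rw [vadd_vsub, real_inner_smul_right]
    positivity

theorem inner_vsub_vsub_eq_inner_orthogonalProjection_vsub {s : AffineSubspace ℝ P} [Nonempty s]
    [s.direction.HasOrthogonalProjection] (c : P) {p x : P} (hp : p ∈ s) (hx : x ∈ s) :
    ⟪c -ᵥ p, x -ᵥ p⟫ = ⟪(orthogonalProjection s c : P) -ᵥ p, x -ᵥ p⟫ := by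
  rw [← vsub_add_vsub_cancel c (orthogonalProjection s c : P) p, inner_add_left,
    Submodule.inner_left_of_mem_orthogonal (vsub_mem_direction hx hp)
      (vsub_orthogonalProjection_mem_direction_orthogonal s c), zero_add]

theorem AffineSubspace.finite_setOf_dist_eq_dist_eq {s : AffineSubspace ℝ P}
    (hs : finrank ℝ s.direction = 2) {c₁ c₂ : P} (hc₁ : c₁ ∈ s) (hc₂ : c₂ ∈ s) (hc : c₁ ≠ c₂)
    (r₁ r₂ : ℝ) : {x | x ∈ s ∧ dist x c₁ = r₁ ∧ dist x c₂ = r₂}.Finite := by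
  have : FiniteDimensional ℝ s.direction := Module.finite_of_finrank_eq_succ hs
  by_cases hsub : {x | x ∈ s ∧ dist x c₁ = r₁ ∧ dist x c₂ = r₂}.Subsingleton
  · exact hsub.finite
  obtain ⟨x₁, ⟨hx₁s, hx₁c₁, hx₁c₂⟩, x₂, ⟨hx₂s, hx₂c₁, hx₂c₂⟩, hx⟩ :=
    Set.not_subsingleton_iff.1 hsub
  refine (Set.toFinite {x₁, x₂}).subset fun x ⟨hxs, hxc₁, hxc₂⟩ ↦ ?_
  exact eq_of_dist_eq_of_dist_eq_of_mem_of_finrank_eq_two hs hc₁ hc₂ hx₁s hx₂s hxs hc hx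
    hx₁c₁ hx₂c₁ hxc₁ hx₁c₂ hx₂c₂ hxc₂

theorem finite_tangent_lines_of_orthogonalProjection_ne {T : AffineSubspace ℝ P}
    (hT : finrank ℝ T.direction = 2) [Nonempty T] [T.direction.HasOrthogonalProjection]
    {c p : P} (hp : p ∈ T) (hc : (orthogonalProjection T c : P) ≠ p) (r : ℝ) :
    {L : AffineSubspace ℝ P | finrank ℝ L.direction = 1 ∧ L ≤ T ∧ p ∈ L ∧
      Metric.infDist c L = r}.Finite := by
  set q : P := ↑(orthogonalProjection T c) with hq
  set σ := √(dist c p ^ 2 - r ^ 2)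
  have hX := finite_setOf_dist_eq_dist_eq hT hp (orthogonalProjection_mem c) hc.symm
    1 √(1 - 2 * σ + dist q p ^ 2)
  refine (hX.image fun x ↦ line[ℝ, p, x]).subset ?_
  rintro L ⟨hL, hLT, hpL, hLc⟩
  obtain ⟨x, rfl, hxp, hx⟩ := exists_affineSpan_pair_eq_of_finrank_direction_eq_one hL hpL (q -ᵥ p)
  have hxT : x ∈ T := hLT (right_mem_affineSpan_pair ℝ p x)
  have hinner : ⟪q -ᵥ p, x -ᵥ p⟫ = σ := by
    have h := infDist_affineSpan_pair_sq (c := c) hxp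
    rw [hLc, inner_vsub_vsub_eq_inner_orthogonalProjection_vsub c hp hxT, ← hq] at h
    rw [← Real.sqrt_sq hx, ← show dist c p ^ 2 - r ^ 2 = ⟪q -ᵥ p, x -ᵥ p⟫ ^ 2 by linarith]
  refine ⟨x, ⟨hxT, hxp, ?_⟩, rfl⟩
  rw [← Real.sqrt_sq dist_nonneg, dist_eq_norm_vsub V, dist_eq_norm_vsub V q,
    ← vsub_sub_vsub_cancel_right x q p, norm_sub_sq_real, ← dist_eq_norm_vsub V, hxp,
    real_inner_comm, hinner, one_pow]

theorem isTangentAt_of_infinite_tangent_lines {T : AffineSubspace ℝ P}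
    (hT : finrank ℝ T.direction = 2) {c p : P} {r : ℝ} (hp : p ∈ T)
    (h : {L : AffineSubspace ℝ P | finrank ℝ L.direction = 1 ∧ L ≤ T ∧ p ∈ L ∧
      Metric.infDist c L = r}.Infinite) :
    (⟨c, r⟩ : Sphere P).IsTangentAt p T := by
  have : FiniteDimensional ℝ T.direction := Module.finite_of_finrank_eq_succ hT
  have : Nonempty T := ⟨⟨p, hp⟩⟩
  have hq : (orthogonalProjection T c : P) = p := by
    by_contra hq
    exact h (finite_tangent_lines_of_orthogonalProjection_ne hT hp hq r)
  obtain ⟨L, hL, hLT, hpL, hLc⟩ := h.nonempty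
  obtain ⟨x, rfl, hxp, -⟩ := exists_affineSpan_pair_eq_of_finrank_direction_eq_one hL hpL 0
  have hcp : dist c p = r := by
    have h := infDist_affineSpan_pair_sq (c := c) hxp
    rw [inner_vsub_vsub_eq_inner_orthogonalProjection_vsub c hp
      (hLT (right_mem_affineSpan_pair ℝ p x)), hq, vsub_self, inner_zero_left, hLc] at h
    refine (sq_eq_sq₀ dist_nonneg ?_).1 (by linarith)
    exact hLc ▸ Metric.infDist_nonneg
  rw [← hq] at hcp ⊢
  exact Sphere.dist_orthogonalProjection_eq_radius_iff_isTangentAt.1 hcp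

theorem EuclideanGeometry.Sphere.IsTangentAt.inter_eq_singleton {s : Sphere P} {p : P}
    {as : AffineSubspace ℝ P} (h : s.IsTangentAt p as) : (s : Set P) ∩ as = {p} := by
  ext x
  exact h.mem_and_mem_iff_eq

end Euclidean

theorem infinitely_many_pencil_tangents_general
    (c₁ c₂ : E3) (r₁ r₂ : ℝ)
    (ℓ : AffineSubspace ℝ E3) (hℓ : IsLine ℓ)
    (P : AffineSubspace ℝ E3) (hP : IsPlane P) (p : E3) (hpP : p ∈ P)
    (hinf : {L : AffineSubspace ℝ E3 | IsLine L ∧ (L : Set E3) ⊆ (P : Set E3) ∧ p ∈ L ∧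
        Tangent c₁ r₁ L ∧ Tangent c₂ r₂ L ∧ Meets L ℓ}.Infinite) :
    Metric.sphere c₁ r₁ ∩ (P : Set E3) = {p} ∧
    Metric.sphere c₂ r₂ ∩ (P : Set E3) = {p} ∧
    (p ∈ ℓ ∨ (ℓ : Set E3) ⊆ (P : Set E3)) :=
  ⟨(isTangentAt_of_infinite_tangent_lines hP hpP
      (hinf.mono fun _ hL ↦ ⟨hL.1, hL.2.1, hL.2.2.1, hL.2.2.2.1⟩)).inter_eq_singleton,
    (isTangentAt_of_infinite_tangent_lines hP hpP
      (hinf.mono fun _ hL ↦ ⟨hL.1, hL.2.1, hL.2.2.1, hL.2.2.2.2.1⟩)).inter_eq_singleton,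
    mem_or_le_of_infinite_lines_meet hℓ
      (hinf.mono fun _ hL ↦ ⟨hL.1, hL.2.1, hL.2.2.1, hL.2.2.2.2.2⟩)⟩

/-- If infinitely many lines lying in a plane `P` and passing through a point `p ∈ P`
are tangent to two spheres and meet a line `ℓ`, then both spheres are tangent to `P`
at `p`, and `ℓ` passes through `p` or lies in `P`. -/
theorem infinitely_many_pencil_tangents
    (c₁ c₂ : E3) (r₁ r₂ : ℝ) (hr₁ : 0 < r₁) (hr₂ : 0 < r₂)
    (ℓ : AffineSubspace ℝ E3) (hℓ : IsLine ℓ)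
    (P : AffineSubspace ℝ E3) (hP : IsPlane P) (p : E3) (hpP : p ∈ P)
    (hinf : {L : AffineSubspace ℝ E3 | IsLine L ∧ (L : Set E3) ⊆ (P : Set E3) ∧ p ∈ L ∧
        Tangent c₁ r₁ L ∧ Tangent c₂ r₂ L ∧ Meets L ℓ}.Infinite) :
    Metric.sphere c₁ r₁ ∩ (P : Set E3) = {p} ∧
    Metric.sphere c₂ r₂ ∩ (P : Set E3) = {p} ∧
    (p ∈ ℓ ∨ (ℓ : Set E3) ⊆ (P : Set E3)) :=
  infinitely_many_pencil_tangents_general c₁ c₂ r₁ r₂ ℓ hℓ P hP p hpP hinf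
end
end

section
/- Let S = S(c,r) be a sphere in Euclidean 3-space with r > 0, let Π be a plane and p ∈ Π a point. The following are equivalent: (a) infinitely many lines L with L ⊆ Π and p ∈ L are tangent to S; (b) every line L with L ⊆ Π and p ∈ L is tangent to S; (c) S ∩ Π = {p}, i.e., S is tangent to the plane Π at the point p. -/
noncomputable section

/-!
Write `w = p - c`. A line through `p` with direction `v` is at distance `r` from `c` iff
`⟪v, w⟫² = (‖w‖² - r²) ‖v‖²`. Choosing an orthonormal basis `e₁, e₂` of the plane, the lines
`p + ℝ (e₁ + s e₂)` together with `p + ℝ e₂` exhaust the pencil, and tangency of the former is a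
quadratic equation in `s`. Infinitely many tangent lines force this quadratic to vanish
identically, i.e. `⟪e₁, w⟫ = ⟪e₂, w⟫ = 0` and `‖w‖ = r`: the plane is the tangent plane at `p`,
and then every line of the pencil is tangent.
-/

open EuclideanGeometry AffineSubspace Module RealInnerProductSpace Submodule

lemma eq_zero_of_infinite_setOf_quadratic_eq_zero {K : Type*} [Field K] {a b c : K}
    (h : {x : K | a * x ^ 2 + b * x + c = 0}.Infinite) : a = 0 ∧ b = 0 ∧ c = 0 := by
  open Polynomial in
  have hq : C a * X ^ 2 + C b * X + C c = 0 := eq_zero_of_infinite_isRoot _ (by simpa using h)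
  refine ⟨?_, ?_, ?_⟩
  · simpa using congrArg (coeff · 2) hq
  · simpa using congrArg (coeff · 1) hq
  · simpa using congrArg (coeff · 0) hq

section Pencil

variable {k V P : Type*} [DivisionRing k] [AddCommGroup V] [Module k V] [AddTorsor V P]

lemma LinearIndependent.add_smul_ne_zero {x y : V} (h : LinearIndependent k ![x, y]) (s : k) :
    x + s • y ≠ 0 := fun hxy ↦
  one_ne_zero (LinearIndependent.pair_iff.1 h 1 s (by rwa [one_smul])).1

lemma AffineSubspace.exists_eq_mk'_span_singleton {L : AffineSubspace k P}
    (hL : finrank k L.direction = 1) {p : P} (hp : p ∈ L) : ∃ v ≠ 0, L = mk' p (k ∙ v) := by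
  obtain ⟨⟨v, hvL⟩, hv, hspan⟩ := finrank_eq_one_iff'.1 hL
  refine ⟨v, by simpa using hv, ?_⟩
  conv_lhs => rw [← mk'_eq hp]
  congr 1
  refine le_antisymm (fun x hx ↦ ?_) ((span_singleton_le_iff_mem _ _).2 hvL)
  obtain ⟨a, ha⟩ := hspan ⟨x, hx⟩
  exact mem_span_singleton.2 ⟨a, congrArg Subtype.val ha⟩

lemma AffineSubspace.eq_mk'_span_singleton_or_of_direction_le {e₁ e₂ : V} {p : P}
    {L : AffineSubspace k P} (hL : finrank k L.direction = 1) (hpL : p ∈ L)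
    (hLe : L.direction ≤ span k {e₁, e₂}) :
    L = mk' p (k ∙ e₂) ∨ ∃ s : k, L = mk' p (k ∙ (e₁ + s • e₂)) := by
  obtain ⟨v, hv, rfl⟩ := exists_eq_mk'_span_singleton hL hpL
  rw [direction_mk', span_singleton_le_iff_mem, mem_span_pair] at hLe
  obtain ⟨a, b, rfl⟩ := hLe
  rcases eq_or_ne a 0 with rfl | ha
  · have hb : b ≠ 0 := by rintro rfl; simp at hv
    left
    rw [zero_smul, zero_add, span_singleton_smul_eq (IsUnit.mk0 b hb)]
  · right
    refine ⟨a⁻¹ * b, ?_⟩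
    rw [← span_singleton_smul_eq (IsUnit.mk0 a ha) (e₁ + _), smul_add, smul_smul,
      mul_inv_cancel_left₀ ha]

lemma AffineSubspace.mk'_span_singleton_add_smul_injective {e₁ e₂ : V}
    (h : LinearIndependent k ![e₁, e₂]) (p : P) :
    Function.Injective fun s : k ↦ mk' p (k ∙ (e₁ + s • e₂)) := by
  intro s s' hs
  have hdir := congrArg direction hs
  simp only [direction_mk'] at hdir
  obtain ⟨t, ht⟩ := mem_span_singleton.1 (hdir ▸ mem_span_singleton_self (e₁ + s • e₂))
  rw [smul_add, smul_smul] at ht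
  obtain ⟨rfl, hs⟩ := LinearIndependent.pair_iffₛ.1 h t (t * s') 1 s (by rwa [one_smul])
  simpa using hs.symm

end Pencil

variable {V P : Type*} [NormedAddCommGroup V] [InnerProductSpace ℝ V] [MetricSpace P]
  [NormedAddTorsor V P]

lemma Submodule.exists_orthonormal_pair_span_eq {D : Submodule ℝ V} (hD : finrank ℝ D = 2) :
    ∃ e₁ e₂ : V, Orthonormal ℝ ![e₁, e₂] ∧ span ℝ {e₁, e₂} = D := by
  have : FiniteDimensional ℝ D := .of_finrank_pos (by omega)
  let b := (stdOrthonormalBasis ℝ D).reindex (finCongr hD)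
  have hb : ![(b 0 : V), b 1] = D.subtypeₗᵢ ∘ b := by
    ext i : 1; fin_cases i <;> rfl
  refine ⟨b 0, b 1, hb ▸ b.orthonormal.comp_linearIsometry _, ?_⟩
  refine le_antisymm (span_le.2 (by simp [Set.insert_subset_iff])) fun x hx ↦ ?_
  rw [mem_span_pair]
  refine ⟨b.repr ⟨x, hx⟩ 0, b.repr ⟨x, hx⟩ 1, ?_⟩
  simpa [Fin.sum_univ_two] using congrArg Subtype.val (b.sum_repr ⟨x, hx⟩)

lemma infDist_sq_mk'_span_singleton (c p : P) {v : V} (hv : v ≠ 0) :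
    Metric.infDist c (mk' p (ℝ ∙ v) : Set P) ^ 2 =
      ‖p -ᵥ c‖ ^ 2 - ⟪v, p -ᵥ c⟫ ^ 2 / ‖v‖ ^ 2 := by
  have : Nonempty (mk' p (ℝ ∙ v)) := ⟨⟨p, self_mem_mk' p _⟩⟩
  have : (mk' p (ℝ ∙ v)).direction.HasOrthogonalProjection := by
    rw [direction_mk']; infer_instance
  rw [← dist_orthogonalProjection_eq_infDist, orthogonalProjection_apply_mem _ (self_mem_mk' p _),
    dist_eq_norm_vsub V, coe_orthogonalProjectionOnto_apply]
  simp only [direction_mk']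
  rw [starProjection_singleton, vsub_vadd_eq_vsub_sub, ← neg_vsub_eq_vsub_rev p c,
    norm_sub_sq_real, inner_neg_left, inner_neg_right, norm_neg, real_inner_smul_right, norm_smul,
    Real.norm_eq_abs, mul_pow, sq_abs, real_inner_comm v, RCLike.ofReal_real_eq_id, id]
  have : ‖v‖ ≠ 0 := norm_ne_zero_iff.2 hv
  field_simp
  ring

lemma infDist_mk'_span_singleton_eq_iff {c p : P} {v : V} (hv : v ≠ 0) {r : ℝ} (hr : 0 ≤ r) :
    Metric.infDist c (mk' p (ℝ ∙ v) : Set P) = r ↔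
      ⟪v, p -ᵥ c⟫ ^ 2 = (‖p -ᵥ c‖ ^ 2 - r ^ 2) * ‖v‖ ^ 2 := by
  rw [← sq_eq_sq₀ Metric.infDist_nonneg hr, infDist_sq_mk'_span_singleton c p hv]
  have : ‖v‖ ^ 2 ≠ 0 := by positivity
  constructor <;> intro h
  · field_simp at h; linarith
  · field_simp; linarith

lemma infDist_mk'_span_singleton_add_smul_eq_iff {e₁ e₂ : V} (he : Orthonormal ℝ ![e₁, e₂])
    {c p : P} {r : ℝ} (hr : 0 ≤ r) (s : ℝ) :
    Metric.infDist c (mk' p (ℝ ∙ (e₁ + s • e₂)) : Set P) = r ↔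
      (⟪e₂, p -ᵥ c⟫ ^ 2 - (‖p -ᵥ c‖ ^ 2 - r ^ 2)) * s ^ 2 +
        2 * ⟪e₁, p -ᵥ c⟫ * ⟪e₂, p -ᵥ c⟫ * s + (⟪e₁, p -ᵥ c⟫ ^ 2 - (‖p -ᵥ c‖ ^ 2 - r ^ 2)) = 0 := by
  have he₁ : ‖e₁‖ = 1 := by simpa using he.1 0
  have he₂ : ‖e₂‖ = 1 := by simpa using he.1 1
  have he₁₂ : ⟪e₁, e₂⟫ = 0 := by simpa using he.2 (show (0 : Fin 2) ≠ 1 by decide)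
  rw [infDist_mk'_span_singleton_eq_iff (he.linearIndependent.add_smul_ne_zero s) hr,
    inner_add_left, real_inner_smul_left, norm_add_sq_real, real_inner_smul_right, norm_smul,
    Real.norm_eq_abs, mul_pow, sq_abs, he₁, he₂, he₁₂]
  constructor <;> intro h <;> linear_combination h

namespace EuclideanGeometry.Sphere

lemma isTangentAt_iff_of_mem {s : Sphere P} {p : P} {A : AffineSubspace ℝ P} (hp : p ∈ A) :
    s.IsTangentAt p A ↔ p ∈ s ∧ A.direction ≤ (ℝ ∙ (p -ᵥ s.center))ᗮ := by
  simp only [SetLike.le_def, mem_orthogonal_singleton_iff_inner_left]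
  refine ⟨fun h ↦ ⟨h.mem_sphere, fun v hv ↦ ?_⟩, fun h ↦ ⟨h.1, hp, fun x hx ↦ ?_⟩⟩
  · simpa using h.inner_left_eq_zero_of_mem (vadd_mem_of_mem_direction hv hp)
  · exact mem_orthRadius_iff_inner_left.2 (h.2 (vsub_mem_direction hx hp))

/-- For `x ∈ A`, the second intersection of the line `px` with `s` lies in `s ∩ A = {p}`, which
forces `x - p ⟂ p - s.center`. -/
lemma inter_eq_singleton_iff_isTangentAt {s : Sphere P} {p : P} {A : AffineSubspace ℝ P} :
    (s ∩ A : Set P) = {p} ↔ s.IsTangentAt p A := by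
  refine ⟨fun h ↦ ?_, fun h ↦ Set.ext fun q ↦ h.mem_and_mem_iff_eq⟩
  have hp : p ∈ (s ∩ A : Set P) := h ▸ rfl
  refine ⟨hp.1, hp.2, fun x hx ↦ ?_⟩
  rw [mem_orthRadius_iff_inner_left, ← secondInter_eq_self_iff]
  refine h.subset ⟨(secondInter_mem _).2 hp.1, ?_⟩
  exact vadd_mem_of_mem_direction (smul_mem _ _ (vsub_mem_direction hx hp.2)) hp.2

lemma IsTangentAt.of_le {s : Sphere P} {p : P} {A L : AffineSubspace ℝ P} (h : s.IsTangentAt p A)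
    (hLA : L ≤ A) (hpL : p ∈ L) : s.IsTangentAt p L :=
  ⟨h.mem_sphere, hpL, hLA.trans h.le_orthRadius⟩

end EuclideanGeometry.Sphere

section Plane

variable {A : AffineSubspace ℝ P} {p : P}

lemma infinite_setOf_lines_through (hA : finrank ℝ A.direction = 2) (hp : p ∈ A) :
    {L : AffineSubspace ℝ P | finrank ℝ L.direction = 1 ∧ (L : Set P) ⊆ A ∧ p ∈ L}.Infinite := by
  obtain ⟨e₁, e₂, he, hspan⟩ := exists_orthonormal_pair_span_eq hA
  refine Set.infinite_of_injective_forall_mem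
    (mk'_span_singleton_add_smul_injective he.linearIndependent p) fun s ↦ ?_
  have hmem : e₁ + s • e₂ ∈ A.direction :=
    hspan ▸ add_mem (subset_span (by simp)) (smul_mem _ s (subset_span (by simp)))
  refine ⟨?_, ?_, self_mem_mk' p _⟩
  · rw [direction_mk']
    exact finrank_span_singleton (he.linearIndependent.add_smul_ne_zero s)
  · rw [← mk'_eq hp]
    exact (mk'_le_mk'_iff p).2 ((span_singleton_le_iff_mem _ _).2 hmem)

lemma isTangentAt_of_infinite_setOf_infDist_eq (hA : finrank ℝ A.direction = 2) (hp : p ∈ A)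
    {c : P} {r : ℝ}
    (h : {L : AffineSubspace ℝ P | finrank ℝ L.direction = 1 ∧ (L : Set P) ⊆ A ∧ p ∈ L ∧
      Metric.infDist c L = r}.Infinite) :
    (⟨c, r⟩ : Sphere P).IsTangentAt p A := by
  obtain ⟨_, -, -, -, hL⟩ := h.nonempty
  have hr : 0 ≤ r := hL ▸ Metric.infDist_nonneg
  obtain ⟨e₁, e₂, he, hspan⟩ := exists_orthonormal_pair_span_eq hA
  set α := ⟪e₁, p -ᵥ c⟫
  set β := ⟪e₂, p -ᵥ c⟫
  set κ := ‖p -ᵥ c‖ ^ 2 - r ^ 2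
  have hroots : {s : ℝ | (β ^ 2 - κ) * s ^ 2 + 2 * α * β * s + (α ^ 2 - κ) = 0}.Infinite := by
    refine fun hfin ↦ h (((hfin.image fun s ↦ mk' p (ℝ ∙ (e₁ + s • e₂))).insert
      (mk' p (ℝ ∙ e₂))).subset ?_)
    rintro L ⟨hL, hLA, hpL, hLr⟩
    rcases eq_mk'_span_singleton_or_of_direction_le hL hpL (hspan ▸ direction_le hLA)
      with rfl | ⟨s, rfl⟩
    · exact Set.mem_insert _ _
    · exact Or.inr ⟨s, (infDist_mk'_span_singleton_add_smul_eq_iff he hr s).1 hLr, rfl⟩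
  obtain ⟨h₂, h₁, h₀⟩ := eq_zero_of_infinite_setOf_quadratic_eq_zero hroots
  -- `κ² = α² β² = 0`
  have hκ : κ = 0 := by nlinarith
  have hα : α = 0 := pow_eq_zero_iff two_ne_zero |>.1 (by linarith)
  have hβ : β = 0 := pow_eq_zero_iff two_ne_zero |>.1 (by linarith)
  rw [Sphere.isTangentAt_iff_of_mem hp, ← hspan, span_le, Set.insert_subset_iff,
    Set.singleton_subset_iff]
  refine ⟨?_, mem_orthogonal_singleton_iff_inner_left.2 hα,
    mem_orthogonal_singleton_iff_inner_left.2 hβ⟩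
  rw [EuclideanGeometry.mem_sphere, dist_eq_norm_vsub V]
  nlinarith [norm_nonneg (p -ᵥ c)]

end Plane

theorem pencil_tangency_tfae_general
    (c : E3) (r : ℝ)
    (P : AffineSubspace ℝ E3) (hP : IsPlane P) (p : E3) (hpP : p ∈ P) :
    ({L : AffineSubspace ℝ E3 | IsLine L ∧ (L : Set E3) ⊆ (P : Set E3) ∧ p ∈ L ∧
        Tangent c r L}.Infinite ↔
      Metric.sphere c r ∩ (P : Set E3) = {p}) ∧
    ((∀ L : AffineSubspace ℝ E3, IsLine L → (L : Set E3) ⊆ (P : Set E3) → p ∈ L →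
        Tangent c r L) ↔
      Metric.sphere c r ∩ (P : Set E3) = {p}) := by
  rw [← Sphere.coe_mk c r, Sphere.inter_eq_singleton_iff_isTangentAt]
  have c_to_b (h : (⟨c, r⟩ : Sphere E3).IsTangentAt p P) (L : AffineSubspace ℝ E3) (_ : IsLine L)
      (hLP : (L : Set E3) ⊆ P) (hpL : p ∈ L) : Tangent c r L :=
    (h.of_le hLP hpL).isTangent.infDist_eq_radius
  have b_to_a (h : ∀ L : AffineSubspace ℝ E3, IsLine L → (L : Set E3) ⊆ P → p ∈ L →
      Tangent c r L) :
      {L : AffineSubspace ℝ E3 | IsLine L ∧ (L : Set E3) ⊆ P ∧ p ∈ L ∧ Tangent c r L}.Infinite :=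
    (infinite_setOf_lines_through hP hpP).mono
      fun L hL ↦ ⟨hL.1, hL.2.1, hL.2.2, h L hL.1 hL.2.1 hL.2.2⟩
  have a_to_c := isTangentAt_of_infinite_setOf_infDist_eq (c := c) (r := r) hP hpP
  exact ⟨⟨a_to_c, fun h ↦ b_to_a (c_to_b h)⟩, ⟨fun h ↦ a_to_c (b_to_a h), c_to_b⟩⟩

/-- For a sphere `S(c,r)`, a plane `P` and a point `p ∈ P`, the following are
equivalent: (a) infinitely many lines of `P` through `p` are tangent to the sphere;
(b) every line of `P` through `p` is tangent to the sphere; (c) the sphere meets `P`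
exactly in `{p}`. -/
theorem pencil_tangency_tfae
    (c : E3) (r : ℝ) (hr : 0 < r)
    (P : AffineSubspace ℝ E3) (hP : IsPlane P) (p : E3) (hpP : p ∈ P) :
    ({L : AffineSubspace ℝ E3 | IsLine L ∧ (L : Set E3) ⊆ (P : Set E3) ∧ p ∈ L ∧
        Tangent c r L}.Infinite ↔
      Metric.sphere c r ∩ (P : Set E3) = {p}) ∧
    ((∀ L : AffineSubspace ℝ E3, IsLine L → (L : Set E3) ⊆ (P : Set E3) → p ∈ L →
        Tangent c r L) ↔
      Metric.sphere c r ∩ (P : Set E3) = {p}) :=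
  pencil_tangency_tfae_general c r P hP p hpP
end
end

section
/- Let Π be a plane in Euclidean 3-space, p ∈ Π a point, and ℓ a line. If infinitely many lines L with L ⊆ Π and p ∈ L satisfy L ∩ ℓ ≠ ∅, then p ∈ ℓ or ℓ ⊆ Π. -/
noncomputable section

/-- The direction of a line through two distinct points is the span of their difference. -/
lemma line_direction_eq_span (L : AffineSubspace ℝ E3) (hL : IsLine L)
    {x y : E3} (hx : x ∈ L) (hy : y ∈ L) (hxy : x ≠ y) :
    L.direction = Submodule.span ℝ {y -ᵥ x} := by
  have hv : y -ᵥ x ∈ L.direction := AffineSubspace.vsub_mem_direction hy hx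
  have hle : Submodule.span ℝ {y -ᵥ x} ≤ L.direction := by
    simpa [Submodule.span_le] using hv
  have hne : y -ᵥ x ≠ 0 := by
    simpa [sub_eq_zero] using (Ne.symm hxy)
  have h1 : Module.finrank ℝ (Submodule.span ℝ {y -ᵥ x}) = 1 :=
    finrank_span_singleton hne
  exact (Submodule.eq_of_le_of_finrank_eq hle (by rw [h1, hL])).symm

/-- If infinitely many lines lying in a plane `P` and through `p ∈ P` meet a line `ℓ`,
then `p ∈ ℓ` or `ℓ ⊆ P`. -/
theorem pencil_meets_line
    (P : AffineSubspace ℝ E3) (hP : IsPlane P) (p : E3) (hpP : p ∈ P)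
    (ℓ : AffineSubspace ℝ E3) (hℓ : IsLine ℓ)
    (hinf : {L : AffineSubspace ℝ E3 | IsLine L ∧ (L : Set E3) ⊆ (P : Set E3) ∧ p ∈ L ∧
        ((L : Set E3) ∩ (ℓ : Set E3)).Nonempty}.Infinite) :
    p ∈ ℓ ∨ (ℓ : Set E3) ⊆ (P : Set E3) := by
  by_contra hcon
  push_neg at hcon
  obtain ⟨hpℓ, hℓP⟩ := hcon
  apply hinf
  -- the set is a subsingleton, hence finite
  apply Set.Subsingleton.finite
  rintro L₁ ⟨hL₁, hL₁P, hpL₁, q₁, hq₁L, hq₁ℓ⟩ L₂ ⟨hL₂, hL₂P, hpL₂, q₂, hq₂L, hq₂ℓ⟩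
  have hq₁P : q₁ ∈ P := hL₁P hq₁L
  have hq₂P : q₂ ∈ P := hL₂P hq₂L
  -- the two intersection points agree
  have hq : q₁ = q₂ := by
    by_contra hne
    apply hℓP
    have hdir : ℓ.direction = Submodule.span ℝ {q₂ -ᵥ q₁} :=
      line_direction_eq_span ℓ hℓ hq₁ℓ hq₂ℓ hne
    have hvP : q₂ -ᵥ q₁ ∈ P.direction := AffineSubspace.vsub_mem_direction hq₂P hq₁P
    have hℓdP : ℓ.direction ≤ P.direction := by
      rw [hdir]
      simpa [Submodule.span_le] using hvP
    intro x hx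
    have : x -ᵥ q₁ ∈ P.direction := hℓdP (AffineSubspace.vsub_mem_direction hx hq₁ℓ)
    have := AffineSubspace.vadd_mem_of_mem_direction this hq₁P
    simpa using this
  subst hq
  have hpq : p ≠ q₁ := fun h => hpℓ (h ▸ hq₁ℓ)
  have h1 : L₁.direction = Submodule.span ℝ {q₁ -ᵥ p} :=
    line_direction_eq_span L₁ hL₁ hpL₁ hq₁L hpq
  have h2 : L₂.direction = Submodule.span ℝ {q₁ -ᵥ p} :=
    line_direction_eq_span L₂ hL₂ hpL₂ hq₂L hpq
  exact AffineSubspace.ext_of_direction_eq (h1.trans h2.symm) ⟨p, hpL₁, hpL₂⟩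
end
end

section
/- Let S = S(c,r) be a sphere in Euclidean 3-space with r > 0, let Π be a plane, o ∈ Π a point and ρ > 0, and suppose the circle Π ∩ S(o,ρ) is contained in S. Then every line L with L ⊆ Π such that the distance from o to L equals ρ (i.e., L is tangent in Π to this circle) is tangent to the sphere S, i.e., the distance from c to L equals r. -/
noncomputable section

/-!
The centre `c` projects orthogonally onto the plane `P` at the centre `o` of the circle: for every
`w` in the direction of `P` with `‖w‖ = ρ` the antipodal points `o ± w` of the circle are
equidistant from `c`, so `c - o ⊥ w`. Hence `c` and `o` have the same orthogonal projection `p`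
onto any line `L ⊆ P`. If `L` is tangent to the circle, `p` lies on the circle, hence on the
sphere, and the distance from `c` to `L` is `dist c p = r`.
-/

open EuclideanGeometry

section

variable {V Pt : Type*} [NormedAddCommGroup V] [InnerProductSpace ℝ V] [MetricSpace Pt]
  [NormedAddTorsor V Pt]

lemma inner_vsub_eq_zero_of_dist_vadd_eq_dist_neg_vadd {c o : Pt} {w : V}
    (h : dist (w +ᵥ o) c = dist (-w +ᵥ o) c) : inner ℝ (c -ᵥ o) w = 0 := by
  have hsymm : dist (w +ᵥ o) o = dist (-w +ᵥ o) o := by simp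
  have h2 := inner_vsub_vsub_of_dist_eq_of_dist_eq hsymm h
  rw [vadd_vsub_vadd_cancel_right, inner_sub_right, inner_neg_right] at h2
  linarith

lemma vsub_mem_direction_orthogonal_of_inter_sphere_subset {P : AffineSubspace ℝ Pt}
    {c o : Pt} {r ρ : ℝ} (hoP : o ∈ P) (hρ : 0 < ρ)
    (hsub : (P : Set Pt) ∩ Metric.sphere o ρ ⊆ Metric.sphere c r) :
    c -ᵥ o ∈ P.directionᗮ := by
  rw [Submodule.mem_orthogonal']
  intro v hv
  rcases eq_or_ne v 0 with rfl | hv0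
  · exact inner_zero_right _
  set w : V := (ρ / ‖v‖) • v
  have hw : ‖w‖ = ρ := by
    rw [norm_smul, Real.norm_eq_abs, abs_of_pos (by positivity),
      div_mul_cancel₀ _ (norm_ne_zero_iff.2 hv0)]
  have on_circle : ∀ u ∈ P.direction, ‖u‖ = ρ → dist (u +ᵥ o) c = r := fun u hu hu' =>
    hsub ⟨AffineSubspace.vadd_mem_of_mem_direction hu hoP, by simp [hu']⟩
  have hwP : w ∈ P.direction := P.direction.smul_mem _ hv
  have hcw := inner_vsub_eq_zero_of_dist_vadd_eq_dist_neg_vadd <|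
    (on_circle w hwP hw).trans
      (on_circle (-w) (P.direction.neg_mem hwP) (by rw [norm_neg, hw])).symm
  rw [inner_smul_right] at hcw
  exact (mul_eq_zero.1 hcw).resolve_left (by positivity)

end

theorem tangent_to_circle_tangent_to_sphere_general
    (c : E3) (r : ℝ)
    (P : AffineSubspace ℝ E3)
    (o : E3) (hoP : o ∈ P) (ρ : ℝ) (hρ : 0 < ρ)
    (hsub : (P : Set E3) ∩ Metric.sphere o ρ ⊆ Metric.sphere c r)
    (L : AffineSubspace ℝ E3)
    (hLP : (L : Set E3) ⊆ (P : Set E3))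
    (hLo : Metric.infDist o (L : Set E3) = ρ) :
    Metric.infDist c (L : Set E3) = r := by
  have hL : (L : Set E3).Nonempty := Set.nonempty_iff_ne_empty.2 fun h =>
    hρ.ne' (by rw [← hLo, h, Metric.infDist_empty])
  have : Nonempty L := hL.to_subtype
  set p := orthogonalProjection L o
  have hop : dist o p = ρ := (dist_orthogonalProjection_eq_infDist L o).trans hLo
  have hcp : orthogonalProjection L c = p :=
    orthogonalProjection_eq_orthogonalProjection_iff_vsub_mem.2 <|
      Submodule.orthogonal_le (AffineSubspace.direction_le hLP)
        (vsub_mem_direction_orthogonal_of_inter_sphere_subset hoP hρ hsub)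
  have hpc : dist (p : E3) c = r := hsub ⟨hLP p.2, by rw [Metric.mem_sphere, dist_comm, hop]⟩
  rw [← dist_orthogonalProjection_eq_infDist, hcp, dist_comm, hpc]

/-- If a sphere `S(c,r)` contains the circle cut out on the plane `P` by the sphere
`S(o,ρ)` with `o ∈ P`, then every line of `P` tangent to this circle is tangent to
the sphere `S(c,r)`. -/
theorem tangent_to_circle_tangent_to_sphere
    (c : E3) (r : ℝ) (hr : 0 < r)
    (P : AffineSubspace ℝ E3) (hP : IsPlane P)
    (o : E3) (hoP : o ∈ P) (ρ : ℝ) (hρ : 0 < ρ)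
    (hsub : (P : Set E3) ∩ Metric.sphere o ρ ⊆ Metric.sphere c r)
    (L : AffineSubspace ℝ E3) (hL : IsLine L)
    (hLP : (L : Set E3) ⊆ (P : Set E3))
    (hLo : Metric.infDist o (L : Set E3) = ρ) :
    Metric.infDist c (L : Set E3) = r :=
  tangent_to_circle_tangent_to_sphere_general c r P o hoP ρ hρ hsub L hLP hLo
end
end

section
/- Let ℓ be a line in Euclidean 3-space and let S₁ = S(c₁,r₁) and S₂ = S(c₂,r₂) be spheres with r₁, r₂ > 0 whose centres c₁ and c₂ both lie on ℓ. If there exists at least one line L that is tangent to both S₁ and S₂ and meets ℓ, then the set of lines tangent to both S₁ and S₂ that meet ℓ is infinite. -/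
noncomputable section

open scoped RealInnerProductSpace

lemma aux_exists_unit_span (W : Submodule ℝ E3) (h : Module.finrank ℝ W = 1) :
    ∃ v : E3, ‖v‖ = 1 ∧ W = Submodule.span ℝ {v} := by
  have hrank : Module.rank ℝ W = 1 := by
    rw [← Module.finrank_eq_rank, h]; norm_num
  obtain ⟨v₀, hv₀mem, hv₀ne, hle⟩ := (rank_submodule_eq_one_iff W).mp hrank
  have hspan : W = Submodule.span ℝ {v₀} :=
    le_antisymm hle ((Submodule.span_singleton_le_iff_mem _ _).mpr hv₀mem)
  have hn : ‖v₀‖ ≠ 0 := norm_ne_zero_iff.mpr hv₀ne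
  refine ⟨‖v₀‖⁻¹ • v₀, ?_, ?_⟩
  · rw [norm_smul, norm_inv, norm_norm, inv_mul_cancel₀ hn]
  · rw [hspan, Submodule.span_singleton_smul_eq (isUnit_iff_ne_zero.mpr (inv_ne_zero hn)) v₀]

lemma aux_mem_line_iff {M : AffineSubspace ℝ E3} {q u : E3} (hq : q ∈ M)
    (hdir : M.direction = Submodule.span ℝ {u}) (x : E3) :
    x ∈ M ↔ ∃ t : ℝ, x = t • u + q := by
  rw [← AffineSubspace.vsub_right_mem_direction_iff_mem hq x, hdir,
    Submodule.mem_span_singleton]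
  constructor
  · rintro ⟨t, ht⟩
    rw [vsub_eq_sub] at ht
    exact ⟨t, (sub_eq_iff_eq_add.mp ht.symm)⟩
  · rintro ⟨t, rfl⟩
    exact ⟨t, by simp [vsub_eq_sub]⟩

lemma aux_infDist_line {M : AffineSubspace ℝ E3} {q u : E3} (c : E3) (hu : ‖u‖ = 1)
    (hq : q ∈ M) (hdir : M.direction = Submodule.span ℝ {u}) :
    Metric.infDist c (M : Set E3) = Real.sqrt (‖c - q‖ ^ 2 - ⟪c - q, u⟫ ^ 2) := by
  set d : E3 := c - q with hd
  set p : ℝ := ⟪d, u⟫ with hp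
  have hexpand : ∀ t : ℝ, ‖d - t • u‖ ^ 2 = (t - p) ^ 2 + (‖d‖ ^ 2 - p ^ 2) := by
    intro t
    rw [norm_sub_sq_real, real_inner_smul_right, norm_smul, hu]
    simp [← hp]
    ring
  have hval : 0 ≤ ‖d‖ ^ 2 - p ^ 2 := by
    have := hexpand p
    nlinarith [sq_nonneg ‖d - p • u‖, sq_nonneg (p - p)]
  apply le_antisymm
  · have hmem : p • u + q ∈ M := (aux_mem_line_iff hq hdir _).mpr ⟨p, rfl⟩
    refine (Metric.infDist_le_dist_of_mem hmem).trans_eq ?_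
    rw [dist_eq_norm]
    have h1 : c - (p • u + q) = d - p • u := by rw [hd]; abel
    rw [h1, ← Real.sqrt_sq (norm_nonneg (d - p • u)), hexpand p]
    simp
  · rw [← not_lt]
    intro hlt
    obtain ⟨x, hx, hxlt⟩ := (Metric.infDist_lt_iff ⟨q, hq⟩).mp hlt
    obtain ⟨t, rfl⟩ := (aux_mem_line_iff hq hdir x).mp hx
    have h1 : c - (t • u + q) = d - t • u := by rw [hd]; abel
    rw [dist_eq_norm, h1] at hxlt
    have h2 : ‖d‖ ^ 2 - p ^ 2 ≤ ‖d - t • u‖ ^ 2 := by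
      rw [hexpand t]; nlinarith [sq_nonneg (t - p)]
    have h3 := Real.sqrt_le_sqrt h2
    rw [Real.sqrt_sq (norm_nonneg _)] at h3
    linarith

/-- If the centres of two spheres lie on the line `ℓ` and some line is tangent to both
spheres and meets `ℓ`, then there are infinitely many such lines (rotate about `ℓ`). -/
theorem centres_on_line_infinitely_many_tangents
    (ℓ : AffineSubspace ℝ E3) (hℓ : IsLine ℓ)
    (c₁ c₂ : E3) (r₁ r₂ : ℝ) (hr₁ : 0 < r₁) (hr₂ : 0 < r₂)
    (hc₁ : c₁ ∈ ℓ) (hc₂ : c₂ ∈ ℓ)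
    (hex : ∃ L : AffineSubspace ℝ E3, IsLine L ∧ Tangent c₁ r₁ L ∧ Tangent c₂ r₂ L ∧
      Meets L ℓ) :
    {L : AffineSubspace ℝ E3 | IsLine L ∧ Tangent c₁ r₁ L ∧ Tangent c₂ r₂ L ∧
      Meets L ℓ}.Infinite := by
  obtain ⟨L, hLline, hT1, hT2, q, hqL, hqℓ⟩ := hex
  obtain ⟨v, hv, hvdir⟩ := aux_exists_unit_span ℓ.direction hℓ
  obtain ⟨u₀, hu₀, hu₀dir⟩ := aux_exists_unit_span L.direction hLline
  set s₀ : ℝ := ⟪v, u₀⟫ with hs₀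
  set w : E3 := u₀ - s₀ • v with hwdef
  have hvv : ⟪v, v⟫ = (1 : ℝ) := by
    rw [real_inner_self_eq_norm_sq, hv]; norm_num
  have hvw : ⟪v, w⟫ = 0 := by
    rw [hwdef, inner_sub_right, real_inner_smul_right, hvv]; ring
  have hw0 : w ≠ 0 := by
    intro h0
    have husv : u₀ = s₀ • v := by rwa [hwdef, sub_eq_zero] at h0
    have hs0ne : s₀ ≠ 0 := by
      intro h
      rw [h, zero_smul] at husv
      rw [husv, norm_zero] at hu₀
      norm_num at hu₀
    have hLℓ : L = ℓ := by
      refine AffineSubspace.ext_of_direction_eq ?_ ⟨q, hqL, hqℓ⟩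
      rw [hu₀dir, hvdir, husv,
        Submodule.span_singleton_smul_eq (isUnit_iff_ne_zero.mpr hs0ne) v]
    have h0' : Metric.infDist c₁ (L : Set E3) = 0 :=
      Metric.infDist_zero_of_mem (by rw [hLℓ]; exact hc₁)
    have : r₁ = 0 := by rw [← hT1]; exact h0'
    linarith
  set ρ : ℝ := ‖w‖ with hρdef
  have hρ : 0 < ρ := norm_pos_iff.mpr hw0
  set w1 : E3 := ρ⁻¹ • w with hw1def
  have hw1 : ‖w1‖ = 1 := by
    rw [hw1def, norm_smul, norm_inv, Real.norm_eq_abs, abs_of_pos hρ,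
      inv_mul_cancel₀ (ne_of_gt hρ)]
  have hw1w1 : ⟪w1, w1⟫ = (1 : ℝ) := by
    rw [real_inner_self_eq_norm_sq, hw1]; norm_num
  have hvw1 : ⟪v, w1⟫ = 0 := by
    rw [hw1def, real_inner_smul_right, hvw]; ring
  have hw1v : ⟪w1, v⟫ = 0 := by rw [real_inner_comm]; exact hvw1
  have hρsq : ρ ^ 2 = 1 - s₀ ^ 2 := by
    have hu₀v : ⟪u₀, v⟫ = s₀ := by rw [real_inner_comm]
    rw [hρdef, hwdef, norm_sub_sq_real, real_inner_smul_right, hu₀v, hu₀,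
      norm_smul, hv, Real.norm_eq_abs]
    rw [mul_one, sq_abs]
    ring
  -- a unit vector orthogonal to both v and w
  have hKne : Submodule.span ℝ ({v, w} : Set E3) ≠ ⊤ := by
    intro htop
    have hsp : Submodule.span ℝ ({v, w} : Set E3)
        = Submodule.span ℝ ({v} : Set E3) ⊔ Submodule.span ℝ ({w} : Set E3) := by
      rw [Submodule.span_insert]
    have hv0 : v ≠ 0 := by intro h; rw [h, norm_zero] at hv; norm_num at hv
    have h1 : Module.finrank ℝ (Submodule.span ℝ ({v, w} : Set E3)) ≤ 2 := by
      rw [hsp]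
      have := Submodule.finrank_add_le_finrank_add_finrank
        (Submodule.span ℝ ({v} : Set E3)) (Submodule.span ℝ ({w} : Set E3))
      rw [finrank_span_singleton hv0, finrank_span_singleton hw0] at this
      omega
    rw [htop, finrank_top] at h1
    have h3 : Module.finrank ℝ E3 = 3 := by
      simp [finrank_euclideanSpace]
    omega
  have hKbot : (Submodule.span ℝ ({v, w} : Set E3))ᗮ ≠ ⊥ := by
    intro hbot
    exact hKne (Submodule.orthogonal_eq_bot_iff.mp hbot)
  obtain ⟨e', he'mem, he'ne⟩ := Submodule.ne_bot_iff _ |>.mp hKbot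
  have hve' : ⟪v, e'⟫ = 0 :=
    (Submodule.mem_orthogonal _ e').mp he'mem v
      (Submodule.subset_span (by simp))
  have hwe' : ⟪w, e'⟫ = 0 :=
    (Submodule.mem_orthogonal _ e').mp he'mem w
      (Submodule.subset_span (by simp))
  have hne' : ‖e'‖ ≠ 0 := norm_ne_zero_iff.mpr he'ne
  set e : E3 := ‖e'‖⁻¹ • e' with hedef
  have he : ‖e‖ = 1 := by
    rw [hedef, norm_smul, norm_inv, norm_norm, inv_mul_cancel₀ hne']
  have hee : ⟪e, e⟫ = (1 : ℝ) := by
    rw [real_inner_self_eq_norm_sq, he]; norm_num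
  have hve : ⟪v, e⟫ = 0 := by rw [hedef, real_inner_smul_right, hve']; ring
  have hev : ⟪e, v⟫ = 0 := by rw [real_inner_comm]; exact hve
  have hw1e : ⟪w1, e⟫ = 0 := by
    rw [hw1def, hedef, real_inner_smul_right, real_inner_smul_left, hwe']; ring
  have hew1 : ⟪e, w1⟫ = 0 := by rw [real_inner_comm]; exact hw1e
  -- the family of unit direction vectors
  set f : ℝ → E3 := fun θ => s₀ • v + (ρ * Real.cos θ) • w1 + (ρ * Real.sin θ) • e with hf
  have hfv : ∀ θ, ⟪v, f θ⟫ = s₀ := by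
    intro θ
    simp only [hf, inner_add_right, real_inner_smul_right, hvv, hvw1, hve]
    ring
  have hfw1 : ∀ θ, ⟪w1, f θ⟫ = ρ * Real.cos θ := by
    intro θ
    simp only [hf, inner_add_right, real_inner_smul_right, hw1v, hw1w1, hw1e]
    ring
  have hfe : ∀ θ, ⟪e, f θ⟫ = ρ * Real.sin θ := by
    intro θ
    simp only [hf, inner_add_right, real_inner_smul_right, hev, hew1, hee]
    ring
  have hfnorm : ∀ θ, ‖f θ‖ = 1 := by
    intro θ
    have h2 : ‖f θ‖ ^ 2 = 1 := by
      rw [← real_inner_self_eq_norm_sq]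
      simp only [hf, inner_add_left, inner_add_right, real_inner_smul_left,
        real_inner_smul_right, hvv, hvw1, hve, hw1v, hw1w1, hw1e, hev, hew1, hee,
        mul_zero, zero_mul, add_zero, zero_add, mul_one]
      linear_combination ρ ^ 2 * Real.sin_sq_add_cos_sq θ + hρsq
    rw [← Real.sqrt_sq (norm_nonneg (f θ)), h2, Real.sqrt_one]
  have hfne : ∀ θ, f θ ≠ 0 := by
    intro θ h
    have := hfnorm θ
    rw [h, norm_zero] at this
    norm_num at this
  -- the family of lines
  set M : ℝ → AffineSubspace ℝ E3 := fun θ => affineSpan ℝ {q, f θ + q} with hM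
  have hqM : ∀ θ, q ∈ M θ := fun θ => mem_affineSpan ℝ (Set.mem_insert _ _)
  have hMdir : ∀ θ, (M θ).direction = Submodule.span ℝ {f θ} := by
    intro θ
    show (affineSpan ℝ {q, f θ + q}).direction = _
    rw [direction_affineSpan, vectorSpan_pair_rev]
    congr 1
    simp [vsub_eq_sub]
  have hMline : ∀ θ, IsLine (M θ) := by
    intro θ
    show Module.finrank ℝ (M θ).direction = 1
    rw [hMdir θ]
    exact finrank_span_singleton (hfne θ)
  -- key: infDist from any point of ℓ agrees with that to L
  have hkey : ∀ c ∈ ℓ, ∀ θ, Metric.infDist c ((M θ : Set E3)) = Metric.infDist c (L : Set E3) := by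
    intro c hc θ
    obtain ⟨t, ht⟩ : ∃ t : ℝ, c - q = t • v := by
      have hmem : c -ᵥ q ∈ ℓ.direction :=
        (AffineSubspace.vsub_right_mem_direction_iff_mem hqℓ c).mpr hc
      rw [hvdir, Submodule.mem_span_singleton] at hmem
      obtain ⟨t, ht⟩ := hmem
      rw [vsub_eq_sub] at ht
      exact ⟨t, ht.symm⟩
    rw [aux_infDist_line c (hfnorm θ) (hqM θ) (hMdir θ),
      aux_infDist_line c hu₀ hqL hu₀dir]
    have h1 : ⟪c - q, f θ⟫ = t * s₀ := by
      rw [ht, real_inner_smul_left, hfv θ]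
    have h2 : ⟪c - q, u₀⟫ = t * s₀ := by
      rw [ht, real_inner_smul_left, ← hs₀]
    rw [h1, h2]
  have hmaps : ∀ θ, M θ ∈ {L : AffineSubspace ℝ E3 | IsLine L ∧ Tangent c₁ r₁ L ∧
      Tangent c₂ r₂ L ∧ Meets L ℓ} := by
    intro θ
    refine ⟨hMline θ, ?_, ?_, ⟨q, hqM θ, hqℓ⟩⟩
    · show Metric.infDist c₁ ((M θ : Set E3)) = r₁
      rw [hkey c₁ hc₁ θ]; exact hT1
    · show Metric.infDist c₂ ((M θ : Set E3)) = r₂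
      rw [hkey c₂ hc₂ θ]; exact hT2
  refine Set.infinite_of_injOn_mapsTo (s := Set.Ioo (0 : ℝ) Real.pi) (f := M) ?_
    (fun θ _ => hmaps θ) (Set.Ioo_infinite Real.pi_pos)
  intro θ hθ θ' hθ' hMeq
  have hdir : Submodule.span ℝ ({f θ} : Set E3) = Submodule.span ℝ {f θ'} := by
    rw [← hMdir θ, ← hMdir θ', hMeq]
  have hmem : f θ' ∈ Submodule.span ℝ ({f θ} : Set E3) := by
    rw [hdir]; exact Submodule.mem_span_singleton_self _
  obtain ⟨a, ha⟩ := Submodule.mem_span_singleton.mp hmem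
  have hsin : ρ * Real.sin θ' = a * (ρ * Real.sin θ) := by
    rw [← hfe θ', ← ha, real_inner_smul_right, hfe θ]
  have hcos : ρ * Real.cos θ' = a * (ρ * Real.cos θ) := by
    rw [← hfw1 θ', ← ha, real_inner_smul_right, hfw1 θ]
  have hanorm : |a| = 1 := by
    have h := congrArg norm ha
    rw [norm_smul, hfnorm, hfnorm, Real.norm_eq_abs, mul_one] at h
    exact h
  have hsθ : 0 < Real.sin θ := Real.sin_pos_of_pos_of_lt_pi hθ.1 hθ.2
  have hsθ' : 0 < Real.sin θ' := Real.sin_pos_of_pos_of_lt_pi hθ'.1 hθ'.2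
  have ha1 : a = 1 := by
    rcases (abs_eq (by norm_num : (0:ℝ) ≤ 1)).mp hanorm with h | h
    · exact h
    · exfalso; rw [h] at hsin; nlinarith
  rw [ha1, one_mul] at hcos
  have hcc : Real.cos θ' = Real.cos θ := mul_left_cancel₀ (ne_of_gt hρ) hcos
  exact Real.injOn_cos ⟨le_of_lt hθ.1, le_of_lt hθ.2⟩ ⟨le_of_lt hθ'.1, le_of_lt hθ'.2⟩ hcc.symm
end
end
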